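/- arXiv:1403.2480 — 11 statements merged into one kernel-verified Lean document; each statement's English description precedes it below -/
import Mathlib

section
/- Let L be a natural number and let W_0,...,W_L, V_0,...,V_L and eps be positive real numbers. Among all positive real numbers M_0,...,M_L satisfying the variance constraint sum_{l=0}^{L} V_l/M_l <= eps^2, the cost sum_{l=0}^{L} M_l*W_l attains its global minimum at M_l* = eps^{-2} * sqrt(V_l/W_l) * (sum_{k=0}^{L} sqrt(W_k*V_k)) for l = 0,...,L; moreover these M_l* satisfy the variance constraint with equality and the corresponding minimal cost equals eps^{-2} * (sum_{l=0}^{L} sqrt(W_l*V_l))^2. -/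
lemma mlmc_aux1 (v w : ℝ) (hv : 0 < v) (hw : 0 < w) :
    Real.sqrt (v / w) * w = Real.sqrt (w * v) := by
  have : w * v = (v / w) * w ^ 2 := by field_simp
  rw [this, Real.sqrt_mul (by positivity), Real.sqrt_sq hw.le]

lemma mlmc_aux2 (v w : ℝ) (hv : 0 < v) (hw : 0 < w) :
    v / Real.sqrt (v / w) = Real.sqrt (w * v) := by
  have hs : 0 < Real.sqrt (v / w) := Real.sqrt_pos.2 (div_pos hv hw)
  rw [div_eq_iff hs.ne', ← Real.sqrt_mul (by positivity)]
  have : w * v * (v / w) = v ^ 2 := by field_simp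
  rw [this, Real.sqrt_sq hv.le]

/-- Optimal sample allocation in Multilevel Monte Carlo: given positive level
costs `W l`, level variances `V l` and a variance budget `eps ^ 2`, the cost
`∑ M l * W l` over positive `M` satisfying `∑ V l / M l ≤ eps ^ 2` is minimized
at `Mstar l = eps⁻² * √(V l / W l) * ∑ √(W k * V k)`; these satisfy the
variance constraint with equality and give cost `eps⁻² * (∑ √(W l * V l))²`. -/
theorem mlmc_optimal_samples (L : ℕ) (W V : ℕ → ℝ) (eps : ℝ)
    (hW : ∀ l ≤ L, 0 < W l) (hV : ∀ l ≤ L, 0 < V l) (heps : 0 < eps)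
    (Mstar : ℕ → ℝ)
    (hMstar : ∀ l, Mstar l =
      (eps ^ 2)⁻¹ * Real.sqrt (V l / W l) * ∑ k ∈ Finset.range (L + 1), Real.sqrt (W k * V k)) :
    (∀ l ≤ L, 0 < Mstar l) ∧
    (∑ l ∈ Finset.range (L + 1), V l / Mstar l = eps ^ 2) ∧
    (∑ l ∈ Finset.range (L + 1), Mstar l * W l
        = (eps ^ 2)⁻¹ * (∑ l ∈ Finset.range (L + 1), Real.sqrt (W l * V l)) ^ 2) ∧
    (∀ M : ℕ → ℝ, (∀ l ≤ L, 0 < M l) →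
      (∑ l ∈ Finset.range (L + 1), V l / M l ≤ eps ^ 2) →
      ∑ l ∈ Finset.range (L + 1), Mstar l * W l ≤ ∑ l ∈ Finset.range (L + 1), M l * W l) := by
  set S := ∑ k ∈ Finset.range (L + 1), Real.sqrt (W k * V k) with hS
  have heps2 : (0:ℝ) < eps ^ 2 := by positivity
  have hSpos : 0 < S := by
    apply Finset.sum_pos
    · intro k hk
      rw [Finset.mem_range_succ_iff] at hk
      exact Real.sqrt_pos.2 (mul_pos (hW k hk) (hV k hk))
    · exact ⟨0, Finset.mem_range.2 (Nat.succ_pos L)⟩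
  have hpos : ∀ l ≤ L, 0 < Mstar l := by
    intro l hl
    rw [hMstar l]
    have h1 : 0 < Real.sqrt (V l / W l) := Real.sqrt_pos.2 (div_pos (hV l hl) (hW l hl))
    positivity
  have hterm : ∀ l ∈ Finset.range (L + 1),
      Mstar l * W l = Real.sqrt (W l * V l) * ((eps ^ 2)⁻¹ * S) := by
    intro l hl
    rw [Finset.mem_range_succ_iff] at hl
    rw [hMstar l, ← mlmc_aux1 (V l) (W l) (hV l hl) (hW l hl)]
    ring
  have hcost : ∑ l ∈ Finset.range (L + 1), Mstar l * W l = (eps ^ 2)⁻¹ * S ^ 2 := by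
    rw [Finset.sum_congr rfl hterm, ← Finset.sum_mul, ← hS]
    ring
  refine ⟨hpos, ?_, hcost, ?_⟩
  · -- variance constraint with equality
    have hv : ∀ l ∈ Finset.range (L + 1),
        V l / Mstar l = eps ^ 2 * (Real.sqrt (W l * V l) / S) := by
      intro l hl
      rw [Finset.mem_range_succ_iff] at hl
      have hs : 0 < Real.sqrt (V l / W l) := Real.sqrt_pos.2 (div_pos (hV l hl) (hW l hl))
      rw [hMstar l,
        show (eps ^ 2)⁻¹ * Real.sqrt (V l / W l) * S
          = Real.sqrt (V l / W l) * ((eps ^ 2)⁻¹ * S) by ring,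
        ← div_div, mlmc_aux2 (V l) (W l) (hV l hl) (hW l hl)]
      field_simp
    rw [Finset.sum_congr rfl hv, ← Finset.mul_sum, ← Finset.sum_div, ← hS,
      div_self hSpos.ne', mul_one]
  · -- optimality via Cauchy-Schwarz
    intro M hM hvar
    have hCS : S ^ 2 ≤ (∑ l ∈ Finset.range (L + 1), V l / M l)
        * ∑ l ∈ Finset.range (L + 1), M l * W l := by
      have key : S = ∑ l ∈ Finset.range (L + 1),
          Real.sqrt (V l / M l) * Real.sqrt (M l * W l) := by
        apply Finset.sum_congr rfl
        intro l hl
        rw [Finset.mem_range_succ_iff] at hl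
        have hMl := hM l hl
        rw [← Real.sqrt_mul (div_nonneg (hV l hl).le hMl.le)]
        congr 1
        field_simp
      rw [key]
      calc (∑ l ∈ Finset.range (L + 1), Real.sqrt (V l / M l) * Real.sqrt (M l * W l)) ^ 2
          ≤ (∑ l ∈ Finset.range (L + 1), Real.sqrt (V l / M l) ^ 2)
            * ∑ l ∈ Finset.range (L + 1), Real.sqrt (M l * W l) ^ 2 :=
            Finset.sum_mul_sq_le_sq_mul_sq _ _ _
        _ = _ := by
            congr 1 <;> apply Finset.sum_congr rfl <;> intro l hl <;>
              rw [Finset.mem_range_succ_iff] at hl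
            · exact Real.sq_sqrt (div_nonneg (hV l hl).le (hM l hl).le)
            · exact Real.sq_sqrt (mul_nonneg (hM l hl).le (hW l hl).le)
    have hMWpos : 0 ≤ ∑ l ∈ Finset.range (L + 1), M l * W l := by
      apply Finset.sum_nonneg
      intro l hl
      rw [Finset.mem_range_succ_iff] at hl
      exact (mul_pos (hM l hl) (hW l hl)).le
    rw [hcost, inv_mul_le_iff₀ heps2]
    calc S ^ 2 ≤ (∑ l ∈ Finset.range (L + 1), V l / M l)
        * ∑ l ∈ Finset.range (L + 1), M l * W l := hCS
      _ ≤ eps ^ 2 * ∑ l ∈ Finset.range (L + 1), M l * W l :=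
          mul_le_mul_of_nonneg_right hvar hMWpos
end

section
/- Assume q2 = d*gamma (i.e. chi = 1). Fix a natural number L, theta in (0,1) and tol > 0. Define beta = ( (Q_W/((1-theta)*tol))^{1/q1} * (V_0/Q_S)^{1/q2} )^{1/(L+1)}, h_l = beta^{L-l} * ((1-theta)*tol/Q_W)^{1/q1} and M_l = beta^{-q2*l} * V_0 * (L+1) * (C_alpha/(theta*tol))^2 for l = 0,...,L. Then (h_0,...,h_L, M_0,...,M_L) satisfies the bias constraint and the variance constraint, and for every other choice of positive reals h'_0,...,h'_L, M'_0,...,M'_L satisfying both constraints one has sum_{l=0}^{L} M_l * h_l^{-d*gamma} <= sum_{l=0}^{L} M'_l * (h'_l)^{-d*gamma}. -/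
/-- Theorem 2.1 (χ = 1): the explicit geometric hierarchy with level separation
`β = ((Q_W/((1-θ) tol))^{1/q1} (V₀/Q_S)^{1/q2})^{1/(L+1)}` satisfies the bias and
variance constraints and minimizes the total MLMC work among all admissible
hierarchies. -/
theorem mlmc_optimal_hierarchy_chi_eq_one
    (d γ q1 q2 Q_W Q_S V0 C_alpha tol θ : ℝ) (L : ℕ)
    (hd : 0 < d) (hγ : 0 < γ) (hq1 : 0 < q1) (hq2 : 0 < q2)
    (hchi : q2 = d * γ)
    (hQW : 0 < Q_W) (hQS : 0 < Q_S) (hV0 : 0 < V0) (hCα : 0 < C_alpha)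
    (htol : 0 < tol) (hθ0 : 0 < θ) (hθ1 : θ < 1)
    (β : ℝ) (h M : ℕ → ℝ)
    (hβ : β = ((Q_W / ((1 - θ) * tol)) ^ (1 / q1) * (V0 / Q_S) ^ (1 / q2))
        ^ (1 / ((L : ℝ) + 1)))
    (hh : ∀ l, h l = β ^ ((L : ℝ) - (l : ℝ)) * (((1 - θ) * tol / Q_W) ^ (1 / q1)))
    (hM : ∀ l, M l = β ^ (-(q2 * (l : ℝ))) * V0 * ((L : ℝ) + 1) * (C_alpha / (θ * tol)) ^ 2) :
    (Q_W * h L ^ q1 ≤ (1 - θ) * tol) ∧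
    (V0 / M 0 + Q_S * ∑ l ∈ Finset.range L, h l ^ q2 / M (l + 1)
        ≤ (θ * tol / C_alpha) ^ 2) ∧
    (∀ h' M' : ℕ → ℝ,
      (∀ l ≤ L, 0 < h' l) → (∀ l ≤ L, 0 < M' l) →
      (Q_W * h' L ^ q1 ≤ (1 - θ) * tol) →
      (V0 / M' 0 + Q_S * ∑ l ∈ Finset.range L, h' l ^ q2 / M' (l + 1)
          ≤ (θ * tol / C_alpha) ^ 2) →
      ∑ l ∈ Finset.range (L + 1), M l * h l ^ (-(d * γ))
        ≤ ∑ l ∈ Finset.range (L + 1), M' l * h' l ^ (-(d * γ))) := by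
  have hdγ : -(d * γ) = -q2 := by rw [hchi]
  rw [hdγ]
  have h1θ : (0:ℝ) < 1 - θ := by linarith
  have htol' : 0 < (1 - θ) * tol := mul_pos h1θ htol
  have hAbpos : 0 < (1 - θ) * tol / Q_W := div_pos htol' hQW
  set A : ℝ := ((1 - θ) * tol / Q_W) ^ (1 / q1) with hA
  have hApos : 0 < A := Real.rpow_pos_of_pos hAbpos _
  have hXpos : 0 < (Q_W / ((1 - θ) * tol)) ^ (1 / q1) * (V0 / Q_S) ^ (1 / q2) :=
    mul_pos (Real.rpow_pos_of_pos (div_pos hQW htol') _)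
      (Real.rpow_pos_of_pos (div_pos hV0 hQS) _)
  have hβpos : 0 < β := by rw [hβ]; exact Real.rpow_pos_of_pos hXpos _
  have hβne : ∀ x : ℝ, β ^ x ≠ 0 := fun x => (Real.rpow_pos_of_pos hβpos x).ne'
  have hL1 : (0:ℝ) < (L : ℝ) + 1 := by positivity
  have hθt : 0 < θ * tol := mul_pos hθ0 htol
  set T : ℝ := (θ * tol / C_alpha) ^ 2 with hT
  have hTpos : 0 < T := by positivity
  have hc : (C_alpha / (θ * tol)) ^ 2 = T⁻¹ := by
    rw [hT, div_pow, div_pow, inv_div]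
  -- A ^ q1 = (1-θ) tol / Q_W
  have hAq1 : A ^ q1 = (1 - θ) * tol / Q_W := by
    rw [hA, ← Real.rpow_mul hAbpos.le, one_div_mul_cancel hq1.ne', Real.rpow_one]
  -- β ^ (L+1) = X
  have hβL : β ^ ((L : ℝ) + 1)
      = (Q_W / ((1 - θ) * tol)) ^ (1 / q1) * (V0 / Q_S) ^ (1 / q2) := by
    rw [hβ, ← Real.rpow_mul hXpos.le, one_div_mul_cancel hL1.ne', Real.rpow_one]
  -- A * (Q_W/((1-θ)tol))^(1/q1) = 1
  have hAX : A * (Q_W / ((1 - θ) * tol)) ^ (1 / q1) = 1 := by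
    rw [hA, ← Real.mul_rpow hAbpos.le (div_pos hQW htol').le]
    have e : (1 - θ) * tol / Q_W * (Q_W / ((1 - θ) * tol)) = 1 := by
      field_simp
    rw [e, Real.one_rpow]
  have hAβ : A * β ^ ((L : ℝ) + 1) = (V0 / Q_S) ^ (1 / q2) := by
    rw [hβL, ← mul_assoc, hAX, one_mul]
  -- V0 = Q_S * A^q2 * β^((L+1)q2)
  have hV0eq : V0 = Q_S * A ^ q2 * β ^ (((L : ℝ) + 1) * q2) := by
    have h1 : (A * β ^ ((L : ℝ) + 1)) ^ q2 = V0 / Q_S := by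
      rw [hAβ, ← Real.rpow_mul (div_pos hV0 hQS).le,
        one_div_mul_cancel hq2.ne', Real.rpow_one]
    rw [Real.mul_rpow hApos.le (Real.rpow_pos_of_pos hβpos _).le,
      ← Real.rpow_mul hβpos.le] at h1
    have h2 := (eq_div_iff hQS.ne').mp h1
    linear_combination (-1 : ℝ) * h2
  -- key identity
  have hkey : ∀ l : ℕ, Q_S * h l ^ q2 = V0 * β ^ (-(q2 * ((l : ℝ) + 1))) := by
    intro l
    have e : ((L : ℝ) + 1) * q2 + -(q2 * ((l : ℝ) + 1)) = ((L : ℝ) - (l : ℝ)) * q2 := by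
      ring
    rw [hh l, Real.mul_rpow (Real.rpow_pos_of_pos hβpos _).le hApos.le,
      ← Real.rpow_mul hβpos.le]
    rw [hV0eq, mul_assoc (Q_S * A ^ q2), ← Real.rpow_add hβpos, e]
    ring
  have hhpos : ∀ l : ℕ, 0 < h l := by
    intro l
    rw [hh l]
    exact mul_pos (Real.rpow_pos_of_pos hβpos _) hApos
  have hhq2 : ∀ l : ℕ, h l ^ q2 = V0 * β ^ (-(q2 * ((l : ℝ) + 1))) / Q_S := by
    intro l
    rw [eq_div_iff hQS.ne', mul_comm]
    exact hkey l
  -- the bias constraint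
  have bias : Q_W * h L ^ q1 ≤ (1 - θ) * tol := by
    have hhL : h L = A := by
      rw [hh L, sub_self, Real.rpow_zero, one_mul]
    rw [hhL, hAq1, mul_div_cancel₀ _ hQW.ne']
  refine ⟨bias, ?_, ?_⟩
  · -- variance constraint
    have hM0 : M 0 = V0 * ((L : ℝ) + 1) * T⁻¹ := by
      rw [hM 0, hc]
      norm_num [Real.rpow_zero]
    have hterm : ∀ l : ℕ, h l ^ q2 / M (l + 1) = T / (Q_S * ((L : ℝ) + 1)) := by
      intro l
      have hb1 := hβne (-(q2 * ((l : ℝ) + 1)))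
      rw [hhq2 l, hM (l + 1), hc]
      push_cast
      field_simp
    rw [hM0, Finset.sum_congr rfl fun l _ => hterm l, Finset.sum_const,
      Finset.card_range, nsmul_eq_mul]
    apply le_of_eq
    field_simp
    ring
  · -- optimality
    intro h' M' hh' hM' hbias hvar
    -- our work per level is constant
    have hwork : ∀ l : ℕ, M l * h l ^ (-q2) = ((L : ℝ) + 1) * Q_S * β ^ q2 / T := by
      intro l
      have hb1 := hβne (-(q2 * ((l : ℝ) + 1)))
      have hinv : h l ^ (-q2) = (h l ^ q2)⁻¹ := Real.rpow_neg (hhpos l).le q2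
      have hsplit : β ^ (-(q2 * (l : ℝ))) = β ^ q2 * β ^ (-(q2 * ((l : ℝ) + 1))) := by
        rw [← Real.rpow_add hβpos]
        congr 1
        ring
      rw [hM l, hinv, hhq2 l, hc, hsplit]
      field_simp
    have hwsum : ∑ l ∈ Finset.range (L + 1), M l * h l ^ (-q2)
        = ((L : ℝ) + 1) * (((L : ℝ) + 1) * Q_S * β ^ q2 / T) := by
      rw [Finset.sum_congr rfl fun l _ => hwork l, Finset.sum_const, Finset.card_range,
        nsmul_eq_mul]
      push_cast
      ring
    -- value of Q_S β^q2
    have hQβ : Q_S * β ^ q2 = (V0 * Q_S ^ L * A ^ (-q2)) ^ (1 / ((L : ℝ) + 1)) := by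
      have hβq2 : β ^ (((L : ℝ) + 1) * q2) = V0 * A ^ (-q2) / Q_S := by
        rw [hV0eq, Real.rpow_neg hApos.le]
        have hAq2 := (Real.rpow_pos_of_pos hApos q2).ne'
        field_simp
      have h1 : (Q_S * β ^ q2) ^ ((L : ℝ) + 1) = V0 * Q_S ^ L * A ^ (-q2) := by
        rw [Real.mul_rpow hQS.le (Real.rpow_pos_of_pos hβpos q2).le,
          ← Real.rpow_mul hβpos.le, mul_comm q2 ((L : ℝ) + 1), hβq2,
          Real.rpow_add hQS, Real.rpow_one, Real.rpow_natCast]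
        field_simp
      rw [← h1, ← Real.rpow_mul (by positivity), mul_one_div, div_self hL1.ne',
        Real.rpow_one]
    -- bias for the competitor
    have hb : h' L ≤ A := by
      have h1 : h' L ^ q1 ≤ A ^ q1 := by
        rw [hAq1, le_div_iff₀ hQW]
        linarith [hbias]
      exact (Real.rpow_le_rpow_iff (hh' L le_rfl).le hApos.le hq1).1 h1
    -- variance as a single sum
    set v : ℕ → ℝ := fun n => if n = 0 then V0 else Q_S * h' (n - 1) ^ q2 with hv
    have hv0 : v 0 = V0 := by simp [hv]
    have hvs : ∀ i : ℕ, v (i + 1) = Q_S * h' i ^ q2 := by intro i; simp [hv]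
    have hvpos : ∀ l ∈ Finset.range (L + 1), 0 < v l := by
      intro l hl
      cases l with
      | zero => rw [hv0]; exact hV0
      | succ i =>
        rw [hvs i]
        have hi : i ≤ L := by
          have := Finset.mem_range.mp hl; omega
        exact mul_pos hQS (Real.rpow_pos_of_pos (hh' i hi) _)
    have hvar' : ∑ l ∈ Finset.range (L + 1), v l / M' l ≤ T := by
      rw [Finset.sum_range_succ']
      simp only [hvs, hv0]
      have e1 : ∑ i ∈ Finset.range L, Q_S * h' i ^ q2 / M' (i + 1)
          = Q_S * ∑ i ∈ Finset.range L, h' i ^ q2 / M' (i + 1) := by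
        rw [Finset.mul_sum]
        exact Finset.sum_congr rfl fun i _ => by rw [mul_div_assoc]
      rw [e1]
      linarith [hvar]
    -- Cauchy-Schwarz
    set z : ℕ → ℝ := fun l => Real.sqrt (v l * h' l ^ (-q2)) with hz
    set S : ℝ := ∑ l ∈ Finset.range (L + 1), z l with hS
    have hW'nonneg : 0 ≤ ∑ l ∈ Finset.range (L + 1), M' l * h' l ^ (-q2) := by
      apply Finset.sum_nonneg
      intro l hl
      have hlL : l ≤ L := Finset.mem_range_succ_iff.mp hl
      exact (mul_pos (hM' l hlL) (Real.rpow_pos_of_pos (hh' l hlL) _)).le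
    have hcs : S ^ 2 ≤ T * ∑ l ∈ Finset.range (L + 1), M' l * h' l ^ (-q2) := by
      have cs := Finset.sum_mul_sq_le_sq_mul_sq (Finset.range (L + 1))
        (fun l => Real.sqrt (v l / M' l))
        (fun l => Real.sqrt (M' l * h' l ^ (-q2)))
      have e1 : ∑ l ∈ Finset.range (L + 1),
          Real.sqrt (v l / M' l) * Real.sqrt (M' l * h' l ^ (-q2)) = S := by
        rw [hS]
        refine Finset.sum_congr rfl fun l hl => ?_
        have hlL : l ≤ L := Finset.mem_range_succ_iff.mp hl
        rw [← Real.sqrt_mul (div_nonneg (hvpos l hl).le (hM' l hlL).le)]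
        simp only [hz]
        congr 1
        field_simp [(hM' l hlL).ne']
      have e2 : ∑ l ∈ Finset.range (L + 1), Real.sqrt (v l / M' l) ^ 2
          = ∑ l ∈ Finset.range (L + 1), v l / M' l := by
        refine Finset.sum_congr rfl fun l hl => ?_
        have hlL : l ≤ L := Finset.mem_range_succ_iff.mp hl
        exact Real.sq_sqrt (div_nonneg (hvpos l hl).le (hM' l hlL).le)
      have e3 : ∑ l ∈ Finset.range (L + 1), Real.sqrt (M' l * h' l ^ (-q2)) ^ 2
          = ∑ l ∈ Finset.range (L + 1), M' l * h' l ^ (-q2) := by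
        refine Finset.sum_congr rfl fun l hl => ?_
        have hlL : l ≤ L := Finset.mem_range_succ_iff.mp hl
        exact Real.sq_sqrt (mul_pos (hM' l hlL) (Real.rpow_pos_of_pos (hh' l hlL) _)).le
      rw [e1, e2, e3] at cs
      calc S ^ 2 ≤ (∑ l ∈ Finset.range (L + 1), v l / M' l)
            * ∑ l ∈ Finset.range (L + 1), M' l * h' l ^ (-q2) := cs
        _ ≤ T * ∑ l ∈ Finset.range (L + 1), M' l * h' l ^ (-q2) :=
            mul_le_mul_of_nonneg_right hvar' hW'nonneg
    -- AM-GM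
    set P : ℝ := ∏ l ∈ Finset.range (L + 1), z l with hP
    have hznn : ∀ l ∈ Finset.range (L + 1), (0:ℝ) ≤ z l := fun l _ => Real.sqrt_nonneg _
    have hPnn : 0 ≤ P := Finset.prod_nonneg hznn
    have hamgm : ((L : ℝ) + 1) * P ^ (1 / ((L : ℝ) + 1)) ≤ S := by
      have am := Real.geom_mean_le_arith_mean_weighted (Finset.range (L + 1))
        (fun _ => 1 / ((L : ℝ) + 1)) z (fun i _ => by positivity)
        (by
          rw [Finset.sum_const, Finset.card_range, nsmul_eq_mul]
          push_cast
          rw [mul_one_div, div_self hL1.ne'])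
        hznn
      rw [Real.finset_prod_rpow _ _ hznn, ← hP, ← Finset.mul_sum, ← hS] at am
      have h2 := mul_le_mul_of_nonneg_left am hL1.le
      calc ((L : ℝ) + 1) * P ^ (1 / ((L : ℝ) + 1))
          ≤ ((L : ℝ) + 1) * (1 / ((L : ℝ) + 1) * S) := h2
        _ = S := by field_simp
    -- product telescopes
    have hQ : ∏ l ∈ Finset.range (L + 1), (v l * h' l ^ (-q2))
        = V0 * Q_S ^ L * h' L ^ (-q2) := by
      rw [Finset.prod_mul_distrib, Finset.prod_range_succ', Finset.prod_range_succ]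
      simp only [hvs, hv0]
      rw [Finset.prod_mul_distrib, Finset.prod_const, Finset.card_range]
      have htel : (∏ i ∈ Finset.range L, h' i ^ q2)
          * ∏ i ∈ Finset.range L, h' i ^ (-q2) = 1 := by
        rw [← Finset.prod_mul_distrib]
        apply Finset.prod_eq_one
        intro i hi
        rw [← Real.rpow_add (hh' i (le_of_lt (Finset.mem_range.mp hi)))]
        simp
      linear_combination (Q_S ^ L * V0 * h' L ^ (-q2)) * htel
    have hP2 : P ^ 2 = V0 * Q_S ^ L * h' L ^ (-q2) := by
      rw [hP, ← Finset.prod_pow, ← hQ]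
      refine Finset.prod_congr rfl fun l hl => ?_
      have hlL : l ≤ L := Finset.mem_range_succ_iff.mp hl
      simp only [hz]
      exact Real.sq_sqrt (mul_nonneg (hvpos l hl).le
        (Real.rpow_pos_of_pos (hh' l hlL) _).le)
    -- monotonicity in h' L
    have hmono : (V0 * Q_S ^ L * A ^ (-q2)) ^ (1 / ((L : ℝ) + 1))
        ≤ (V0 * Q_S ^ L * h' L ^ (-q2)) ^ (1 / ((L : ℝ) + 1)) := by
      apply Real.rpow_le_rpow (by positivity)
      · exact mul_le_mul_of_nonneg_left
          (Real.rpow_le_rpow_of_nonpos (hh' L le_rfl) hb (neg_nonpos.mpr hq2.le))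
          (by positivity)
      · positivity
    have hsq : (P ^ (1 / ((L : ℝ) + 1))) ^ 2 = (P ^ 2) ^ (1 / ((L : ℝ) + 1)) := by
      rw [← Real.rpow_natCast (P ^ (1 / ((L : ℝ) + 1))) 2, ← Real.rpow_natCast P 2,
        ← Real.rpow_mul hPnn, ← Real.rpow_mul hPnn]
      congr 1
      push_cast
      ring
    -- final assembly
    rw [hwsum]
    have key : T * (((L : ℝ) + 1) * (((L : ℝ) + 1) * Q_S * β ^ q2 / T))
        ≤ T * ∑ l ∈ Finset.range (L + 1), M' l * h' l ^ (-q2) := by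
      have e0 : T * (((L : ℝ) + 1) * (((L : ℝ) + 1) * Q_S * β ^ q2 / T))
          = ((L : ℝ) + 1) ^ 2 * (Q_S * β ^ q2) := by
        field_simp
      calc T * (((L : ℝ) + 1) * (((L : ℝ) + 1) * Q_S * β ^ q2 / T))
          = ((L : ℝ) + 1) ^ 2 * (Q_S * β ^ q2) := e0
        _ = ((L : ℝ) + 1) ^ 2 * (V0 * Q_S ^ L * A ^ (-q2)) ^ (1 / ((L : ℝ) + 1)) := by
            rw [hQβ]
        _ ≤ ((L : ℝ) + 1) ^ 2 * (V0 * Q_S ^ L * h' L ^ (-q2)) ^ (1 / ((L : ℝ) + 1)) :=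
            mul_le_mul_of_nonneg_left hmono (by positivity)
        _ = ((L : ℝ) + 1) ^ 2 * (P ^ 2) ^ (1 / ((L : ℝ) + 1)) := by rw [hP2]
        _ = (((L : ℝ) + 1) * P ^ (1 / ((L : ℝ) + 1))) ^ 2 := by rw [mul_pow, hsq]
        _ ≤ S ^ 2 := pow_le_pow_left₀ (by positivity) hamgm 2
        _ ≤ T * ∑ l ∈ Finset.range (L + 1), M' l * h' l ^ (-q2) := hcs
    exact le_of_mul_le_mul_left key hTpos
end

section
/- The function F(y) = y - log(1+y) is a strictly increasing continuous bijection from (0,infinity) onto (0,infinity), and for every C > 0 the unique y > 0 solving y - log(1+y) = C satisfies 1 < y/C <= e/(e-1) + 1/((e-1)*C), where e = exp(1). -/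
/-!
`F(y) = y - log (1 + y)` vanishes at `0` and increases, since `log` lies strictly below its
tangent `x - 1`; so it maps `(0, ∞)` into itself injectively. The tangent line through the
origin, `e · log x ≤ x`, gives `(e - 1) y ≤ e F(y) + 1`: this is the upper bound on `y / C`,
and it shows that `F` reaches `C` at `y = (e C + 1) / (e - 1)`, whence surjectivity by the
intermediate value theorem. The lower bound is `log (1 + y) > 0`.
-/

open Real Set

theorem strictMonoOn_sub_log_one_add :
    StrictMonoOn (fun y : ℝ => y - log (1 + y)) (Ici 0) := by
  intro a (ha : 0 ≤ a) b (hb : 0 ≤ b) hab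
  have ha1 : 0 < 1 + a := by linarith
  have hratio : log ((1 + b) / (1 + a)) < (1 + b) / (1 + a) - 1 :=
    log_lt_sub_one_of_pos (by positivity) (by rw [Ne, div_eq_one_iff_eq ha1.ne']; linarith)
  have hquot : (1 + b) / (1 + a) - 1 ≤ b - a := by
    rw [div_sub_one ha1.ne', div_le_iff₀ ha1]
    nlinarith
  rw [log_div (by linarith) ha1.ne'] at hratio
  show a - log (1 + a) < b - log (1 + b)
  linarith

theorem continuousOn_sub_log_one_add :
    ContinuousOn (fun y : ℝ => y - log (1 + y)) (Ioi (-1)) :=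
  continuousOn_id.sub <| (continuousOn_const.add continuousOn_id).log fun y (hy : -1 < y) =>
    (show (0 : ℝ) < 1 + y by linarith).ne'

theorem sub_log_one_add_pos {y : ℝ} (hy : -1 < y) (hy0 : y ≠ 0) : 0 < y - log (1 + y) := by
  have := log_lt_sub_one_of_pos (x := 1 + y) (by linarith) (by simpa using hy0)
  linarith

theorem exp_one_sub_one_mul_le {y : ℝ} (hy : -1 < y) :
    (exp 1 - 1) * y ≤ exp 1 * (y - log (1 + y)) + 1 := by
  have h := exp_one_mul_le_exp (x := log (1 + y))
  rw [exp_log (by linarith)] at h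
  linarith

theorem surjOn_sub_log_one_add :
    SurjOn (fun y : ℝ => y - log (1 + y)) (Ioi 0) (Ioi 0) := by
  intro C (hC : 0 < C)
  have he : 1 < exp 1 := one_lt_exp_iff.mpr one_pos
  set b := (exp 1 * C + 1) / (exp 1 - 1)
  have hb : 0 ≤ b := by have := exp_pos 1; positivity
  have hFb : C ≤ b - log (1 + b) := by
    have h := exp_one_sub_one_mul_le (show -1 < b by linarith)
    rw [mul_div_cancel₀ _ (by linarith)] at h
    nlinarith [exp_pos 1]
  obtain ⟨y, ⟨hy0, -⟩, rfl⟩ := intermediate_value_Icc hb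
    (continuousOn_sub_log_one_add.mono fun x (hx : x ∈ Icc 0 b) => by
      show -1 < x; linarith [hx.1])
    (show C ∈ Icc (0 - log (1 + 0)) (b - log (1 + b)) by simpa using ⟨hC.le, hFb⟩)
  refine ⟨y, lt_of_le_of_ne hy0 ?_, rfl⟩
  rintro rfl
  simp at hC

/-- `F(y) = y - log(1+y)` is a strictly increasing continuous bijection from
`(0,∞)` onto `(0,∞)`, and the unique solution `y` of `y - log(1+y) = C`, for
`C > 0`, satisfies `1 < y/C ≤ e/(e-1) + 1/((e-1) C)`. -/
theorem y_minus_log_bijection_and_bounds :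
    StrictMonoOn (fun y : ℝ => y - Real.log (1 + y)) (Set.Ioi 0) ∧
    ContinuousOn (fun y : ℝ => y - Real.log (1 + y)) (Set.Ioi 0) ∧
    Set.BijOn (fun y : ℝ => y - Real.log (1 + y)) (Set.Ioi 0) (Set.Ioi 0) ∧
    (∀ C > (0 : ℝ), ∀ y > (0 : ℝ), y - Real.log (1 + y) = C →
      1 < y / C ∧
      y / C ≤ Real.exp 1 / (Real.exp 1 - 1) + 1 / ((Real.exp 1 - 1) * C)) := by
  have hmono := strictMonoOn_sub_log_one_add.mono Ioi_subset_Ici_self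
  refine ⟨hmono, continuousOn_sub_log_one_add.mono (Ioi_subset_Ioi (by norm_num)),
    ⟨fun y (hy : 0 < y) => sub_log_one_add_pos (by linarith) hy.ne', hmono.injOn,
      surjOn_sub_log_one_add⟩, ?_⟩
  intro C hC y hy hyC
  have he : 1 < exp 1 := one_lt_exp_iff.mpr one_pos
  have hlog : 0 < log (1 + y) := log_pos (by linarith)
  refine ⟨(one_lt_div hC).mpr (by linarith), ?_⟩
  calc y / C ≤ (exp 1 * C + 1) / ((exp 1 - 1) * C) := by
        rw [div_le_div_iff₀ hC (by positivity), ← hyC]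
        nlinarith [exp_one_sub_one_mul_le (show -1 < y by linarith)]
    _ = exp 1 / (exp 1 - 1) + 1 / ((exp 1 - 1) * C) := by
        field_simp
end

section
/- Assume chi = 1 (i.e. q2 = d*gamma) and eta > 0. For a real L >= 0 and tol in (0,1), set theta(L) = (1 + 1/(2*eta*(L+1)))^{-1} and define W(L,tol) = (C_alpha/(theta(L)*tol))^2 * (Q_W/((1-theta(L))*tol))^{1/(eta*(L+1))} * V_0^{1/(L+1)} * Q_S^{L/(L+1)} * (L+1)^2. If L(tol) is any function of tol such that (L(tol)+1)/log(1/tol) tends to 1/(2*eta) as tol -> 0+, then W(L(tol),tol)/(tol^{-2} * (log tol)^2) tends to C_alpha^2 * exp(2) * Q_S * (1/(2*eta))^2 as tol -> 0+. -/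
/-! With `M = L + 1` and `ℓ = log (1/tol)`, the optimal splitting gives `1 - θ = 1/(2ηM + 1)`, so
`W / (tol⁻² ℓ²)` is the product of `C_α² (1 + 1/(2ηM))²`, `Q_W^(1/(ηM))`, `(2ηM + 1)^(1/(ηM))`,
`tol^(-1/(ηM)) = exp (ℓ/(ηM))`, `V₀^(1/M)`, `Q_S^(L/M)` and `(M/ℓ)²`. The hypothesis forces
`M → ∞` and `ℓ/M → 2η`, so these factors tend to `C_α²`, `1`, `1`, `e²`, `1`, `Q_S` and
`(1/(2η))²`. -/

open Filter Topology

noncomputable section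

namespace MLMC

def optimalSplitting (η L : ℝ) : ℝ := (1 + 1 / (2 * η * (L + 1)))⁻¹

def optimalWork (C_alpha Q_W Q_S V0 η L tol : ℝ) : ℝ :=
  (C_alpha / (optimalSplitting η L * tol)) ^ 2
    * (Q_W / ((1 - optimalSplitting η L) * tol)) ^ (1 / (η * (L + 1)))
    * V0 ^ (1 / (L + 1)) * Q_S ^ (L / (L + 1)) * (L + 1) ^ 2

lemma one_sub_optimalSplitting {η L : ℝ} (hη : 0 < η) (hL : 0 < L + 1) :
    1 - optimalSplitting η L = (2 * η * (L + 1) + 1)⁻¹ := by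
  have : 0 < 2 * η * (L + 1) := by positivity
  rw [optimalSplitting]
  field_simp
  ring

lemma optimalWork_div_eq {C_alpha Q_W Q_S V0 η L tol : ℝ} (hη : 0 < η) (hQW : 0 < Q_W)
    (hL : 0 < L + 1) (htol : 0 < tol) (htol1 : tol ≠ 1) :
    optimalWork C_alpha Q_W Q_S V0 η L tol / (tol ^ (-2 : ℝ) * Real.log tol ^ 2) =
      C_alpha ^ 2 * (1 + 1 / (2 * η * (L + 1))) ^ 2 * Q_W ^ (1 / (η * (L + 1)))
        * (2 * η * (L + 1) + 1) ^ (1 / (η * (L + 1)))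
        * Real.exp (Real.log (1 / tol) / (η * (L + 1)))
        * V0 ^ (1 / (L + 1)) * Q_S ^ (L / (L + 1)) * ((L + 1) / Real.log (1 / tol)) ^ 2 := by
  have hlog : Real.log tol ≠ 0 := Real.log_ne_zero_of_pos_of_ne_one htol htol1
  have hbase : Q_W / ((1 - optimalSplitting η L) * tol)
      = Q_W * (2 * η * (L + 1) + 1) * (1 / tol) := by
    rw [one_sub_optimalSplitting hη hL]
    field_simp
  have hpow : (1 / tol) ^ (1 / (η * (L + 1)))
      = Real.exp (Real.log (1 / tol) / (η * (L + 1))) := by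
    rw [Real.rpow_def_of_pos (by positivity), div_eq_mul_one_div (Real.log _)]
  rw [optimalWork, hbase, Real.mul_rpow (by positivity) (by positivity),
    Real.mul_rpow hQW.le (by positivity), hpow, Real.rpow_neg htol.le, Real.rpow_two,
    one_div tol, Real.log_inv, optimalSplitting]
  field_simp

lemma tendsto_two_mul_add_one_rpow_inv {η : ℝ} (hη : 0 < η) :
    Tendsto (fun x => (2 * η * x + 1) ^ (1 / (η * x))) atTop (𝓝 1) := by
  have hlin : Tendsto (fun x => 2 * η * x + 1) atTop atTop :=
    tendsto_atTop_add_const_right _ 1 (tendsto_id.const_mul_atTop (by positivity))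
  refine ((tendsto_rpow_div_mul_add 2 1 (-1) one_ne_zero.symm).comp hlin).congr fun x => ?_
  simp only [Function.comp_apply]
  congr 1
  ring

lemma tendsto_const_rpow_of_tendsto_zero {α : Type*} {l : Filter α} {a : ℝ} {f : α → ℝ}
    (ha : a ≠ 0) (hf : Tendsto f l (𝓝 0)) : Tendsto (fun t => a ^ f t) l (𝓝 1) := by
  simpa using tendsto_const_nhds.rpow hf (Or.inl ha)

lemma tendsto_optimalWork_factors {α : Type*} {l : Filter α} {C_alpha Q_W Q_S V0 η : ℝ}
    {L ℓ : α → ℝ} (hη : 0 < η) (hQW : Q_W ≠ 0) (hV0 : V0 ≠ 0)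
    (hL : Tendsto (fun t => L t + 1) l atTop)
    (hratio : Tendsto (fun t => (L t + 1) / ℓ t) l (𝓝 (1 / (2 * η)))) :
    Tendsto (fun t => C_alpha ^ 2 * (1 + 1 / (2 * η * (L t + 1))) ^ 2
        * Q_W ^ (1 / (η * (L t + 1))) * (2 * η * (L t + 1) + 1) ^ (1 / (η * (L t + 1)))
        * Real.exp (ℓ t / (η * (L t + 1)))
        * V0 ^ (1 / (L t + 1)) * Q_S ^ (L t / (L t + 1)) * ((L t + 1) / ℓ t) ^ 2)
      l (𝓝 (C_alpha ^ 2 * Real.exp 2 * Q_S * (1 / (2 * η)) ^ 2)) := by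
  have hinv : ∀ {c : ℝ}, 0 < c → Tendsto (fun t => 1 / (c * (L t + 1))) l (𝓝 0) := fun hc => by
    simpa only [one_div, Function.comp_def] using
      tendsto_inv_atTop_zero.comp (hL.const_mul_atTop hc)
  have hθ_factor : Tendsto (fun t => (1 + 1 / (2 * η * (L t + 1))) ^ 2) l (𝓝 1) := by
    simpa using ((hinv (by positivity : (0 : ℝ) < 2 * η)).const_add 1).pow 2
  have hgrowth : Tendsto (fun t => (2 * η * (L t + 1) + 1) ^ (1 / (η * (L t + 1)))) l (𝓝 1) :=
    (tendsto_two_mul_add_one_rpow_inv hη).comp hL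
  have hexp : Tendsto (fun t => Real.exp (ℓ t / (η * (L t + 1)))) l (𝓝 (Real.exp 2)) := by
    have h := (hratio.inv₀ (by positivity)).div_const η
    rw [show (1 / (2 * η))⁻¹ / η = 2 by field_simp] at h
    refine (Real.continuous_exp.tendsto 2).comp (h.congr fun t => ?_)
    rw [inv_div, div_div, mul_comm η]
  have hQS : Tendsto (fun t => Q_S ^ (L t / (L t + 1))) l (𝓝 Q_S) := by
    have h : Tendsto (fun t => L t / (L t + 1)) l (𝓝 1) := by
      have h0 := (hinv one_pos).const_sub 1
      rw [sub_zero] at h0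
      refine h0.congr' ?_
      filter_upwards [hL.eventually_gt_atTop 0] with t ht
      field_simp
      ring
    simpa using tendsto_const_nhds.rpow h (Or.inr one_pos)
  have h := ((((((tendsto_const_nhds (x := C_alpha ^ 2)).mul hθ_factor).mul
    (tendsto_const_rpow_of_tendsto_zero hQW (hinv hη))).mul hgrowth).mul hexp).mul
    (tendsto_const_rpow_of_tendsto_zero hV0 (by simpa using hinv one_pos))).mul hQS
  simpa using h.mul (hratio.pow 2)

end MLMC

end

theorem mlmc_asymptotic_work_chi_eq_one_general
    (eta Q_W Q_S V0 C_alpha : ℝ)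
    (heta_pos : 0 < eta)
    (hQW : 0 < Q_W) (hV0 : 0 < V0)
    (θ : ℝ → ℝ) (hθ : ∀ L : ℝ, θ L = (1 + 1 / (2 * eta * (L + 1)))⁻¹)
    (W : ℝ → ℝ → ℝ)
    (hW : ∀ L tol : ℝ, W L tol =
      (C_alpha / (θ L * tol)) ^ 2
        * (Q_W / ((1 - θ L) * tol)) ^ (1 / (eta * (L + 1)))
        * V0 ^ (1 / (L + 1)) * Q_S ^ (L / (L + 1)) * (L + 1) ^ 2)
    (Lf : ℝ → ℝ)
    (hLlim : Tendsto (fun tol => (Lf tol + 1) / Real.log (1 / tol))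
      (nhdsWithin 0 (Set.Ioi 0)) (nhds (1 / (2 * eta)))) :
    Tendsto (fun tol => W (Lf tol) tol / (tol ^ (-2 : ℝ) * Real.log tol ^ 2))
      (nhdsWithin 0 (Set.Ioi 0))
      (nhds (C_alpha ^ 2 * Real.exp 2 * Q_S * (1 / (2 * eta)) ^ 2)) := by
  have hW_eq : ∀ L tol, W L tol = MLMC.optimalWork C_alpha Q_W Q_S V0 eta L tol := by
    intro L tol
    rw [hW, hθ, MLMC.optimalWork, MLMC.optimalSplitting]
  have hlog : Tendsto (fun tol : ℝ => Real.log (1 / tol)) (𝓝[>] 0) atTop := by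
    simpa only [one_div, Function.comp_def] using
      Real.tendsto_log_atTop.comp tendsto_inv_nhdsGT_zero
  have hL : Tendsto (fun tol => Lf tol + 1) (𝓝[>] 0) atTop := by
    refine (hLlim.pos_mul_atTop (by positivity) hlog).congr' ?_
    filter_upwards [hlog.eventually_gt_atTop 0] with tol hℓ using div_mul_cancel₀ _ hℓ.ne'
  refine (MLMC.tendsto_optimalWork_factors heta_pos hQW.ne' hV0.ne' hL hLlim).congr' ?_
  filter_upwards [self_mem_nhdsWithin, hlog.eventually_gt_atTop 0, hL.eventually_gt_atTop 0]
    with tol htol hℓ hM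
  have htol1 : tol ≠ 1 := by
    rintro rfl
    simp at hℓ
  rw [hW_eq, MLMC.optimalWork_div_eq heta_pos hQW hM htol htol1]

/-- Corollary 2.1 (χ = 1): with the optimal splitting `θ(L)`, if
`(L(tol)+1)/log(1/tol) → 1/(2η)` as `tol → 0⁺`, then the optimal total work
satisfies `W(L(tol),tol)/(tol⁻² (log tol)²) → C_α² e² Q_S (1/(2η))²`. -/
theorem mlmc_asymptotic_work_chi_eq_one
    (d γ q1 q2 eta Q_W Q_S V0 C_alpha : ℝ)
    (hd : 0 < d) (hγ : 0 < γ) (hq1 : 0 < q1) (hq2 : 0 < q2)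
    (hchi : q2 = d * γ) (heta : eta = q1 / (d * γ)) (heta_pos : 0 < eta)
    (hQW : 0 < Q_W) (hQS : 0 < Q_S) (hV0 : 0 < V0) (hCα : 0 < C_alpha)
    (θ : ℝ → ℝ) (hθ : ∀ L : ℝ, θ L = (1 + 1 / (2 * eta * (L + 1)))⁻¹)
    (W : ℝ → ℝ → ℝ)
    (hW : ∀ L tol : ℝ, W L tol =
      (C_alpha / (θ L * tol)) ^ 2
        * (Q_W / ((1 - θ L) * tol)) ^ (1 / (eta * (L + 1)))
        * V0 ^ (1 / (L + 1)) * Q_S ^ (L / (L + 1)) * (L + 1) ^ 2)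
    (Lf : ℝ → ℝ) (hLf : ∀ tol ∈ Set.Ioo (0 : ℝ) 1, 0 ≤ Lf tol)
    (hLlim : Tendsto (fun tol => (Lf tol + 1) / Real.log (1 / tol))
      (nhdsWithin 0 (Set.Ioi 0)) (nhds (1 / (2 * eta)))) :
    Tendsto (fun tol => W (Lf tol) tol / (tol ^ (-2 : ℝ) * Real.log tol ^ 2))
      (nhdsWithin 0 (Set.Ioi 0))
      (nhds (C_alpha ^ 2 * Real.exp 2 * Q_S * (1 / (2 * eta)) ^ 2)) :=
  mlmc_asymptotic_work_chi_eq_one_general eta Q_W Q_S V0 C_alpha heta_pos hQW hV0 θ hθ W hW Lf hLlim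
end

section
/- Assume chi = q2/(d*gamma) is positive and different from 1. Fix a natural number L, theta in (0,1) and tol > 0. Define, for l = 0,...,L, h_l = ((1-theta)*tol/Q_W)^{(1/q1)*(1-chi^{l+1})/(1-chi^{L+1})} * (V_0/Q_S)^{(1/(d*gamma))*(chi^l - chi^L)/(1-chi^{L+1})} * chi^{ -(1/(d*gamma))*(2/(1-chi)) * ( (chi^{L+1}-chi^{l+1})/(1-chi^{L+1}) + (L*(1-chi^{l+1}) - l*(1-chi^{L+1}))/(1-chi^{L+1}) ) } and M_l = (C_alpha/(theta*tol))^2 * ((1-theta)*tol)^{(chi/eta)*(1-chi^l)/(1-chi^{L+1})} * V_0^{(chi^l - chi^{L+1})/(1-chi^{L+1})} * (Q_S^{1/chi}/Q_W^{1/eta})^{chi*(1-chi^l)/(1-chi^{L+1})} * ((1-chi^{L+1})/(chi^L*(1-chi))) * chi^{ -(2*chi/(1-chi))*((1-chi^l)/(1-chi^{L+1}))*(L+1) + ((1+chi)/(1-chi))*l }. Then (h_0,...,h_L, M_0,...,M_L) satisfies the bias constraint and the variance constraint, and for every other choice of positive reals h'_0,...,h'_L, M'_0,...,M'_L satisfying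 both constraints one has sum_{l=0}^{L} M_l * h_l^{-d*gamma} <= sum_{l=0}^{L} M'_l * (h'_l)^{-d*gamma}. -/
open Finset

/-- Weighted AM–GM in exponential form. -/
lemma exp_sum_log_le {ι : Type*} (s : Finset ι) (a z : ι → ℝ)
    (ha : ∀ i ∈ s, 0 < a i) (has : ∑ i ∈ s, a i = 1)
    (hz : ∀ i ∈ s, 0 < z i) :
    Real.exp (∑ i ∈ s, a i * Real.log (z i)) ≤ ∑ i ∈ s, a i * z i := by
  set E := Real.exp (∑ i ∈ s, a i * Real.log (z i)) with hE
  have hEpos : 0 < E := Real.exp_pos _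
  have key : ∀ i ∈ s, a i * E * (Real.log (z i) - Real.log E + 1) ≤ a i * z i := by
    intro i hi
    have h1 : Real.log (z i / E) ≤ z i / E - 1 :=
      Real.log_le_sub_one_of_pos (div_pos (hz i hi) hEpos)
    rw [Real.log_div (hz i hi).ne' hEpos.ne'] at h1
    have h2 : E * (Real.log (z i) - Real.log E + 1) ≤ E * (z i / E) := by
      apply mul_le_mul_of_nonneg_left _ hEpos.le
      linarith
    rw [mul_div_cancel₀ _ hEpos.ne'] at h2
    calc a i * E * (Real.log (z i) - Real.log E + 1)
        = a i * (E * (Real.log (z i) - Real.log E + 1)) := by ring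
      _ ≤ a i * z i := mul_le_mul_of_nonneg_left h2 (ha i hi).le
  have hsum : ∑ i ∈ s, a i * E * (Real.log (z i) - Real.log E + 1)
      = E * (∑ i ∈ s, a i * Real.log (z i)) - (Real.log E - 1) * E * (∑ i ∈ s, a i) := by
    rw [Finset.mul_sum, Finset.mul_sum, ← Finset.sum_sub_distrib]
    exact Finset.sum_congr rfl fun i _ => by ring
  calc E = E * (∑ i ∈ s, a i * Real.log (z i)) - (Real.log E - 1) * E * 1 := by
          rw [hE, Real.log_exp]; ring
    _ = ∑ i ∈ s, a i * E * (Real.log (z i) - Real.log E + 1) := by rw [hsum, has]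
    _ ≤ ∑ i ∈ s, a i * z i := Finset.sum_le_sum key

/-- Telescoping identity for the MLMC exponent sums. -/
lemma mlmc_tele (L : ℕ) (a u vv : ℕ → ℝ) (q2 dg lS : ℝ)
    (hq : ∀ l < L, a (l + 1) * q2 = a l * dg)
    (hv : ∀ l < L, vv (l + 1) = lS + q2 * u l) :
    ∑ l ∈ Finset.range (L + 1), a l * (vv l - dg * u l)
      = a 0 * vv 0 + (∑ l ∈ Finset.range L, a (l + 1)) * lS - dg * (a L * u L) := by
  induction L with
  | zero => simp; ring
  | succ n ih =>
    rw [Finset.sum_range_succ, ih (fun l hl => hq l (by omega)) (fun l hl => hv l (by omega)),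
      Finset.sum_range_succ, hv n (by omega)]
    linear_combination u n * hq n (by omega)

set_option maxHeartbeats 4000000 in
/-- Theorem 2.2 (χ ≠ 1): the explicit hierarchy (2.19) satisfies the bias and
variance constraints and minimizes the total MLMC work among all admissible
hierarchies. -/
theorem mlmc_optimal_hierarchy_chi_ne_one
    (d γ q1 q2 χ eta Q_W Q_S V0 C_alpha tol θ : ℝ) (L : ℕ)
    (hd : 0 < d) (hγ : 0 < γ) (hq1 : 0 < q1) (hq2 : 0 < q2)
    (hχ : χ = q2 / (d * γ)) (hχpos : 0 < χ) (hχ1 : χ ≠ 1)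
    (heta : eta = q1 / (d * γ))
    (hQW : 0 < Q_W) (hQS : 0 < Q_S) (hV0 : 0 < V0) (hCα : 0 < C_alpha)
    (htol : 0 < tol) (hθ0 : 0 < θ) (hθ1 : θ < 1)
    (h M : ℕ → ℝ)
    (hh : ∀ l, h l =
      ((1 - θ) * tol / Q_W) ^ ((1 / q1) * (1 - χ ^ (l + 1)) / (1 - χ ^ (L + 1)))
        * (V0 / Q_S) ^ ((1 / (d * γ)) * (χ ^ l - χ ^ L) / (1 - χ ^ (L + 1)))
        * χ ^ (-(1 / (d * γ)) * (2 / (1 - χ))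
            * ((χ ^ (L + 1) - χ ^ (l + 1)) / (1 - χ ^ (L + 1))
              + ((L : ℝ) * (1 - χ ^ (l + 1)) - (l : ℝ) * (1 - χ ^ (L + 1)))
                  / (1 - χ ^ (L + 1)))))
    (hM : ∀ l, M l =
      (C_alpha / (θ * tol)) ^ 2
        * ((1 - θ) * tol) ^ ((χ / eta) * (1 - χ ^ l) / (1 - χ ^ (L + 1)))
        * V0 ^ ((χ ^ l - χ ^ (L + 1)) / (1 - χ ^ (L + 1)))
        * (Q_S ^ (1 / χ) / Q_W ^ (1 / eta)) ^ (χ * (1 - χ ^ l) / (1 - χ ^ (L + 1)))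
        * ((1 - χ ^ (L + 1)) / (χ ^ L * (1 - χ)))
        * χ ^ (-(2 * χ / (1 - χ)) * ((1 - χ ^ l) / (1 - χ ^ (L + 1))) * ((L : ℝ) + 1)
            + ((1 + χ) / (1 - χ)) * (l : ℝ))) :
    (Q_W * h L ^ q1 ≤ (1 - θ) * tol) ∧
    (V0 / M 0 + Q_S * ∑ l ∈ Finset.range L, h l ^ q2 / M (l + 1)
        ≤ (θ * tol / C_alpha) ^ 2) ∧
    (∀ h' M' : ℕ → ℝ,
      (∀ l ≤ L, 0 < h' l) → (∀ l ≤ L, 0 < M' l) →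
      (Q_W * h' L ^ q1 ≤ (1 - θ) * tol) →
      (V0 / M' 0 + Q_S * ∑ l ∈ Finset.range L, h' l ^ q2 / M' (l + 1)
          ≤ (θ * tol / C_alpha) ^ 2) →
      ∑ l ∈ Finset.range (L + 1), M l * h l ^ (-(d * γ))
        ≤ ∑ l ∈ Finset.range (L + 1), M' l * h' l ^ (-(d * γ))) := by
  set dg := d * γ with hdgdef
  have hdgpos : 0 < dg := mul_pos hd hγ
  clear_value dg
  have hq2e : q2 = χ * dg := by rw [hχ, div_mul_cancel₀ _ hdgpos.ne']
  have hetapos : 0 < eta := by rw [heta]; positivity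
  have hq1e : q1 = eta * dg := by rw [heta, div_mul_cancel₀ _ hdgpos.ne']
  have hB : (0:ℝ) < (1 - θ) * tol := mul_pos (by linarith) htol
  have hX1 : (0:ℝ) < (1 - θ) * tol / Q_W := div_pos hB hQW
  have hX2 : (0:ℝ) < V0 / Q_S := div_pos hV0 hQS
  have hθt : (0:ℝ) < θ * tol := mul_pos hθ0 htol
  have hε2 : (0:ℝ) < (θ * tol / C_alpha) ^ 2 := by positivity
  set ε2 : ℝ := (θ * tol / C_alpha) ^ 2 with hε2def
  clear_value ε2
  have hχLne : χ ^ (L + 1) ≠ 1 := by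
    rcases hχ1.lt_or_gt with hlt | hgt
    · exact ne_of_lt (pow_lt_one₀ hχpos.le hlt (Nat.succ_ne_zero L))
    · exact ne_of_gt (one_lt_pow₀ hgt (Nat.succ_ne_zero L))
  have hD : 1 - χ ^ (L + 1) ≠ 0 := sub_ne_zero.mpr (Ne.symm hχLne)
  have h1χ : 1 - χ ≠ 0 := sub_ne_zero.mpr (Ne.symm hχ1)
  have hχne : χ ≠ 0 := hχpos.ne'
  set S : ℝ := (1 - χ ^ (L + 1)) / (χ ^ L * (1 - χ)) with hSdef
  clear_value S
  have hSgeom : ∑ l ∈ Finset.range (L + 1), (χ⁻¹) ^ l = S := by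
    have hinv : χ⁻¹ ≠ 1 := by
      intro hc
      exact hχ1 (by rw [← inv_inv χ, hc, inv_one])
    rw [geom_sum_eq hinv (L + 1), hSdef, inv_pow]
    rw [div_eq_div_iff (sub_ne_zero.mpr hinv) (mul_ne_zero (pow_ne_zero _ hχne) h1χ)]
    field_simp
    ring
  have hSpos : 0 < S := by
    rw [← hSgeom]
    exact Finset.sum_pos (fun i _ => pow_pos (inv_pos.2 hχpos) i) (by simp)
  have hpos : ∀ l, 0 < h l := by
    intro l
    rw [hh l]
    exact mul_pos (mul_pos (Real.rpow_pos_of_pos hX1 _) (Real.rpow_pos_of_pos hX2 _))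
      (Real.rpow_pos_of_pos hχpos _)
  -- h L = A
  set A : ℝ := ((1 - θ) * tol / Q_W) ^ (1 / q1) with hAdef
  clear_value A
  have hhL : h L = A := by
    rw [hh L, hAdef]
    have e1 : (1 / q1) * (1 - χ ^ (L + 1)) / (1 - χ ^ (L + 1)) = 1 / q1 := by
      rw [mul_div_assoc, div_self hD, mul_one]
    have e2 : (1 / dg) * (χ ^ L - χ ^ L) / (1 - χ ^ (L + 1)) = 0 := by ring
    have e3 : (-(1 / dg) * (2 / (1 - χ))
        * ((χ ^ (L + 1) - χ ^ (L + 1)) / (1 - χ ^ (L + 1))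
          + ((L : ℝ) * (1 - χ ^ (L + 1)) - (L : ℝ) * (1 - χ ^ (L + 1)))
              / (1 - χ ^ (L + 1)))) = 0 := by ring
    rw [e1, e2, e3, Real.rpow_zero, Real.rpow_zero, mul_one, mul_one]
  have hbias : Q_W * h L ^ q1 = (1 - θ) * tol := by
    rw [hhL, hAdef, ← Real.rpow_mul hX1.le, one_div, inv_mul_cancel₀ hq1.ne',
      Real.rpow_one, mul_comm, div_mul_cancel₀ _ hQW.ne']
  -- logs of h
  have hlogh : ∀ l : ℕ, Real.log (h l) =
      (1 / q1) * (1 - χ ^ (l + 1)) / (1 - χ ^ (L + 1)) * Real.log ((1 - θ) * tol / Q_W)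
      + (1 / dg) * (χ ^ l - χ ^ L) / (1 - χ ^ (L + 1)) * Real.log (V0 / Q_S)
      + (-(1 / dg) * (2 / (1 - χ))
            * ((χ ^ (L + 1) - χ ^ (l + 1)) / (1 - χ ^ (L + 1))
              + ((L : ℝ) * (1 - χ ^ (l + 1)) - (l : ℝ) * (1 - χ ^ (L + 1)))
                  / (1 - χ ^ (L + 1)))) * Real.log χ := by
    intro l
    rw [hh l,
      Real.log_mul (mul_ne_zero (Real.rpow_pos_of_pos hX1 _).ne'
        (Real.rpow_pos_of_pos hX2 _).ne') (Real.rpow_pos_of_pos hχpos _).ne',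
      Real.log_mul (Real.rpow_pos_of_pos hX1 _).ne' (Real.rpow_pos_of_pos hX2 _).ne',
      Real.log_rpow hX1, Real.log_rpow hX2, Real.log_rpow hχpos]
  -- logs of M
  have hY : (0:ℝ) < Q_S ^ (1 / χ) / Q_W ^ (1 / eta) :=
    div_pos (Real.rpow_pos_of_pos hQS _) (Real.rpow_pos_of_pos hQW _)
  have hlogM : ∀ l : ℕ, Real.log (M l) =
      2 * Real.log (C_alpha / (θ * tol))
      + (χ / eta) * (1 - χ ^ l) / (1 - χ ^ (L + 1)) * Real.log ((1 - θ) * tol)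
      + (χ ^ l - χ ^ (L + 1)) / (1 - χ ^ (L + 1)) * Real.log V0
      + χ * (1 - χ ^ l) / (1 - χ ^ (L + 1))
          * (1 / χ * Real.log Q_S - 1 / eta * Real.log Q_W)
      + Real.log S
      + (-(2 * χ / (1 - χ)) * ((1 - χ ^ l) / (1 - χ ^ (L + 1))) * ((L : ℝ) + 1)
            + (1 + χ) / (1 - χ) * (l : ℝ)) * Real.log χ := by
    intro l
    have p1 : ((C_alpha / (θ * tol)) ^ 2 : ℝ) ≠ 0 := (pow_pos (div_pos hCα hθt) 2).ne'
    have p2 : ((1 - θ) * tol : ℝ) ^ ((χ / eta) * (1 - χ ^ l) / (1 - χ ^ (L + 1))) ≠ 0 :=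
      (Real.rpow_pos_of_pos hB _).ne'
    have p3 : (V0 : ℝ) ^ ((χ ^ l - χ ^ (L + 1)) / (1 - χ ^ (L + 1))) ≠ 0 :=
      (Real.rpow_pos_of_pos hV0 _).ne'
    have p4 : ((Q_S ^ (1 / χ) / Q_W ^ (1 / eta)) : ℝ)
        ^ (χ * (1 - χ ^ l) / (1 - χ ^ (L + 1))) ≠ 0 := (Real.rpow_pos_of_pos hY _).ne'
    have p5 : S ≠ 0 := hSpos.ne'
    have p6 : (χ : ℝ) ^ (-(2 * χ / (1 - χ)) * ((1 - χ ^ l) / (1 - χ ^ (L + 1))) * ((L : ℝ) + 1)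
        + (1 + χ) / (1 - χ) * (l : ℝ)) ≠ 0 := (Real.rpow_pos_of_pos hχpos _).ne'
    rw [hM l,
      Real.log_mul (mul_ne_zero (mul_ne_zero (mul_ne_zero (mul_ne_zero p1 p2) p3) p4) p5) p6,
      Real.log_mul (mul_ne_zero (mul_ne_zero (mul_ne_zero p1 p2) p3) p4) p5,
      Real.log_mul (mul_ne_zero (mul_ne_zero p1 p2) p3) p4,
      Real.log_mul (mul_ne_zero p1 p2) p3,
      Real.log_mul p1 p2,
      Real.log_pow, Real.log_rpow hB, Real.log_rpow hV0, Real.log_rpow hY,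
      Real.log_rpow hχpos,
      Real.log_div (Real.rpow_pos_of_pos hQS _).ne' (Real.rpow_pos_of_pos hQW _).ne',
      Real.log_rpow hQS, Real.log_rpow hQW]
    push_cast
    ring
  -- M 0
  have hM0 : M 0 = V0 * S / ε2 := by
    rw [hM 0]
    have e1 : (χ / eta) * (1 - χ ^ 0) / (1 - χ ^ (L + 1)) = 0 := by
      rw [pow_zero]; ring
    have e2 : (χ ^ 0 - χ ^ (L + 1)) / (1 - χ ^ (L + 1)) = 1 := by
      rw [pow_zero]; exact div_self hD
    have e3 : χ * (1 - χ ^ 0) / (1 - χ ^ (L + 1)) = 0 := by rw [pow_zero]; ring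
    have e4 : (-(2 * χ / (1 - χ)) * ((1 - χ ^ 0) / (1 - χ ^ (L + 1))) * ((L : ℝ) + 1)
        + (1 + χ) / (1 - χ) * ((0 : ℕ) : ℝ)) = 0 := by rw [pow_zero]; push_cast; ring
    rw [e1, e2, e3, e4, Real.rpow_zero, Real.rpow_zero, Real.rpow_zero, Real.rpow_one,
      mul_one, mul_one, mul_one, hε2def]
    rw [div_pow, div_pow]
    field_simp
  -- M (l+1)
  have hMpos : ∀ l, 0 < M l := by
    intro l
    rw [hM l]
    exact mul_pos (mul_pos (mul_pos (mul_pos (mul_pos (pow_pos (div_pos hCα hθt) 2)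
      (Real.rpow_pos_of_pos hB _)) (Real.rpow_pos_of_pos hV0 _))
      (Real.rpow_pos_of_pos hY _)) hSpos) (Real.rpow_pos_of_pos hχpos _)
  have hMs : ∀ l : ℕ, M (l + 1) = χ ^ (l + 1) * S * (Q_S * h l ^ q2) / ε2 := by
    intro l
    have hRpos : 0 < χ ^ (l + 1) * S * (Q_S * h l ^ q2) / ε2 :=
      div_pos (mul_pos (mul_pos (pow_pos hχpos _) hSpos)
        (mul_pos hQS (Real.rpow_pos_of_pos (hpos l) _))) hε2
    apply Real.log_injOn_pos (Set.mem_Ioi.mpr (hMpos (l + 1))) (Set.mem_Ioi.mpr hRpos)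
    rw [hlogM (l + 1),
      Real.log_div (mul_pos (mul_pos (pow_pos hχpos _) hSpos)
        (mul_pos hQS (Real.rpow_pos_of_pos (hpos l) _))).ne' hε2.ne',
      Real.log_mul (mul_pos (pow_pos hχpos _) hSpos).ne'
        (mul_pos hQS (Real.rpow_pos_of_pos (hpos l) _)).ne',
      Real.log_mul (pow_pos hχpos _).ne' hSpos.ne',
      Real.log_mul hQS.ne' (Real.rpow_pos_of_pos (hpos l) _).ne',
      Real.log_rpow (hpos l), Real.log_pow, hε2def, Real.log_pow,
      Real.log_div hCα.ne' hθt.ne', Real.log_div hθt.ne' hCα.ne',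
      hlogh l, Real.log_div hB.ne' hQW.ne', Real.log_div hV0.ne' hQS.ne',
      hq2e, hq1e]
    push_cast
    field_simp
    ring
  -- the balancing identity χ^(2(l+1)) v_{l+1} w_{l+1} = c
  have hzc : ∀ l : ℕ, χ ^ (2 * (l + 1)) * ((Q_S * h l ^ q2) * h (l + 1) ^ (-dg))
      = V0 * h 0 ^ (-dg) := by
    intro l
    have hLpos : 0 < χ ^ (2 * (l + 1)) * ((Q_S * h l ^ q2) * h (l + 1) ^ (-dg)) :=
      mul_pos (pow_pos hχpos _) (mul_pos (mul_pos hQS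
        (Real.rpow_pos_of_pos (hpos l) _)) (Real.rpow_pos_of_pos (hpos (l + 1)) _))
    have hRpos : 0 < V0 * h 0 ^ (-dg) := mul_pos hV0 (Real.rpow_pos_of_pos (hpos 0) _)
    apply Real.log_injOn_pos (Set.mem_Ioi.mpr hLpos) (Set.mem_Ioi.mpr hRpos)
    rw [Real.log_mul (pow_pos hχpos _).ne' (mul_pos (mul_pos hQS
        (Real.rpow_pos_of_pos (hpos l) _)) (Real.rpow_pos_of_pos (hpos (l + 1)) _)).ne',
      Real.log_mul (mul_pos hQS (Real.rpow_pos_of_pos (hpos l) _)).ne'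
        (Real.rpow_pos_of_pos (hpos (l + 1)) _).ne',
      Real.log_mul hQS.ne' (Real.rpow_pos_of_pos (hpos l) _).ne',
      Real.log_mul hV0.ne' (Real.rpow_pos_of_pos (hpos 0) _).ne',
      Real.log_rpow (hpos l), Real.log_rpow (hpos (l + 1)), Real.log_rpow (hpos 0),
      Real.log_pow, hlogh l, hlogh (l + 1), hlogh 0,
      Real.log_div hB.ne' hQW.ne', Real.log_div hV0.ne' hQS.ne', hq2e, hq1e]
    push_cast
    field_simp
    ring
  -- variance equality
  have hvar : V0 / M 0 + Q_S * ∑ l ∈ Finset.range L, h l ^ q2 / M (l + 1) = ε2 := by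
    have e0 : V0 / M 0 = ε2 / S * (χ⁻¹) ^ 0 := by
      rw [hM0, pow_zero, mul_one]
      field_simp
    have es : ∀ l : ℕ, Q_S * (h l ^ q2 / M (l + 1)) = ε2 / S * (χ⁻¹) ^ (l + 1) := by
      intro l
      rw [hMs l, inv_pow]
      have h1 : (0:ℝ) < h l ^ q2 := Real.rpow_pos_of_pos (hpos l) _
      field_simp
    rw [Finset.mul_sum]
    calc V0 / M 0 + ∑ l ∈ Finset.range L, Q_S * (h l ^ q2 / M (l + 1))
        = ε2 / S * (χ⁻¹) ^ 0 + ∑ l ∈ Finset.range L, ε2 / S * (χ⁻¹) ^ (l + 1) := by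
          rw [e0]; congr 1; exact Finset.sum_congr rfl fun l _ => es l
      _ = ε2 / S * ∑ l ∈ Finset.range (L + 1), (χ⁻¹) ^ l := by
          rw [Finset.sum_range_succ' (fun l => (χ⁻¹) ^ l) L, mul_add, Finset.mul_sum]
          ring
      _ = ε2 := by rw [hSgeom]; field_simp
  -- work value
  have hwork : ∑ l ∈ Finset.range (L + 1), M l * h l ^ (-dg)
      = S * S * (V0 * h 0 ^ (-dg)) / ε2 := by
    have e0 : M 0 * h 0 ^ (-dg) = S * (V0 * h 0 ^ (-dg)) / ε2 * (χ⁻¹) ^ 0 := by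
      rw [hM0, pow_zero, mul_one]; ring
    have es : ∀ l : ℕ, M (l + 1) * h (l + 1) ^ (-dg)
        = S * (V0 * h 0 ^ (-dg)) / ε2 * (χ⁻¹) ^ (l + 1) := by
      intro l
      have h2 : (Q_S * h l ^ q2) * h (l + 1) ^ (-dg) = (V0 * h 0 ^ (-dg)) / χ ^ (2 * (l + 1)) := by
        rw [eq_div_iff (pow_ne_zero _ hχne)]
        linear_combination hzc l
      calc M (l + 1) * h (l + 1) ^ (-dg)
          = χ ^ (l + 1) * S / ε2 * ((Q_S * h l ^ q2) * h (l + 1) ^ (-dg)) := by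
            rw [hMs l]; ring
        _ = χ ^ (l + 1) * S / ε2 * ((V0 * h 0 ^ (-dg)) / χ ^ (2 * (l + 1))) := by rw [h2]
        _ = S * (V0 * h 0 ^ (-dg)) / ε2 * (χ⁻¹) ^ (l + 1) := by
            rw [inv_pow, two_mul, pow_add]
            field_simp
            ring
    calc ∑ l ∈ Finset.range (L + 1), M l * h l ^ (-dg)
        = (∑ l ∈ Finset.range L, M (l + 1) * h (l + 1) ^ (-dg)) + M 0 * h 0 ^ (-dg) :=
          Finset.sum_range_succ' _ L
      _ = (∑ l ∈ Finset.range L, S * (V0 * h 0 ^ (-dg)) / ε2 * (χ⁻¹) ^ (l + 1))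
          + S * (V0 * h 0 ^ (-dg)) / ε2 * (χ⁻¹) ^ 0 := by
          rw [e0]; congr 1; exact Finset.sum_congr rfl fun l _ => es l
      _ = S * (V0 * h 0 ^ (-dg)) / ε2 * ∑ l ∈ Finset.range (L + 1), (χ⁻¹) ^ l := by
          rw [Finset.sum_range_succ' (fun l => (χ⁻¹) ^ l) L, mul_add, Finset.mul_sum]
      _ = S * S * (V0 * h 0 ^ (-dg)) / ε2 := by rw [hSgeom]; ring
  refine ⟨hbias.le, hvar.le, ?_⟩
  -- optimality
  intro h' M' hh' hM' hbias' hvar'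
  set c : ℝ := V0 * h 0 ^ (-dg) with hcdef
  have hcpos : 0 < c := by rw [hcdef]; exact mul_pos hV0 (Real.rpow_pos_of_pos (hpos 0) _)
  clear_value c
  set a : ℕ → ℝ := fun l => (χ⁻¹) ^ l / S with hadef
  have hapos : ∀ l, 0 < a l := fun l => div_pos (pow_pos (inv_pos.2 hχpos) l) hSpos
  have hasum : ∑ l ∈ Finset.range (L + 1), a l = 1 := by
    rw [hadef, ← Finset.sum_div, hSgeom, div_self hSpos.ne']
  have harel : ∀ l, a (l + 1) * q2 = a l * dg := by
    intro l
    rw [hadef]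
    simp only
    rw [hq2e, pow_succ]
    field_simp
  have haS : ∀ l : ℕ, a l * (S * χ ^ l) = 1 := by
    intro l
    rw [hadef]
    simp only
    rw [inv_pow]
    field_simp
  -- the competitor's data
  set v' : ℕ → ℝ := fun l => Nat.casesOn l V0 (fun k => Q_S * h' k ^ q2) with hv'def
  have hv'0 : v' 0 = V0 := rfl
  have hv's : ∀ k, v' (k + 1) = Q_S * h' k ^ q2 := fun k => rfl
  set vH : ℕ → ℝ := fun l => Nat.casesOn l V0 (fun k => Q_S * h k ^ q2) with hvHdef
  have hvH0 : vH 0 = V0 := rfl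
  have hvHs : ∀ k, vH (k + 1) = Q_S * h k ^ q2 := fun k => rfl
  have hv'pos : ∀ l ∈ Finset.range (L + 1), 0 < v' l := by
    intro l hl
    match l with
    | 0 => exact hV0
    | k + 1 =>
      have hk : k ≤ L := by have := Finset.mem_range.mp hl; omega
      exact mul_pos hQS (Real.rpow_pos_of_pos (hh' k hk) _)
  have hw'pos : ∀ l ∈ Finset.range (L + 1), 0 < h' l ^ (-dg) := by
    intro l hl
    exact Real.rpow_pos_of_pos (hh' l (by have := Finset.mem_range.mp hl; omega)) _
  set T' : ℕ → ℝ := fun l => Real.sqrt (v' l * h' l ^ (-dg)) with hT'def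
  have hT'pos : ∀ l ∈ Finset.range (L + 1), 0 < T' l := by
    intro l hl
    exact Real.sqrt_pos.mpr (mul_pos (hv'pos l hl) (hw'pos l hl))
  -- Cauchy–Schwarz
  have hCS : (∑ l ∈ Finset.range (L + 1), T' l) ^ 2
      ≤ (∑ l ∈ Finset.range (L + 1), v' l / M' l)
        * ∑ l ∈ Finset.range (L + 1), M' l * h' l ^ (-dg) := by
    apply Finset.sum_sq_le_sum_mul_sum_of_sq_eq_mul
    · intro l hl
      exact (div_pos (hv'pos l hl) (hM' l (by have := Finset.mem_range.mp hl; omega))).le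
    · intro l hl
      exact (mul_pos (hM' l (by have := Finset.mem_range.mp hl; omega)) (hw'pos l hl)).le
    · intro l hl
      rw [hT'def]
      simp only
      rw [Real.sq_sqrt (mul_pos (hv'pos l hl) (hw'pos l hl)).le]
      have hM'ne : M' l ≠ 0 := (hM' l (by have := Finset.mem_range.mp hl; omega)).ne'
      field_simp
  -- the variance budget
  have hvsum : ∑ l ∈ Finset.range (L + 1), v' l / M' l ≤ ε2 := by
    have heq : ∑ l ∈ Finset.range (L + 1), v' l / M' l
        = V0 / M' 0 + Q_S * ∑ l ∈ Finset.range L, h' l ^ q2 / M' (l + 1) := by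
      rw [Finset.sum_range_succ', Finset.mul_sum, hv'0, add_comm]
      congr 1
      refine Finset.sum_congr rfl fun l _ => ?_
      rw [hv's l, mul_div_assoc]
    rw [heq]
    exact hvar'
  -- AM–GM lower bound on ∑ T'
  have hAMGM : S * Real.sqrt c ≤ ∑ l ∈ Finset.range (L + 1), T' l := by
    have hzpos : ∀ l ∈ Finset.range (L + 1), 0 < S * χ ^ l * T' l := by
      intro l hl
      exact mul_pos (mul_pos hSpos (pow_pos hχpos l)) (hT'pos l hl)
    have hsum_eq : ∑ l ∈ Finset.range (L + 1), T' l
        = ∑ l ∈ Finset.range (L + 1), a l * (S * χ ^ l * T' l) := by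
      refine Finset.sum_congr rfl fun l hl => ?_
      rw [← mul_assoc, haS l, one_mul]
    rw [hsum_eq]
    have hexp := exp_sum_log_le (Finset.range (L + 1)) a (fun l => S * χ ^ l * T' l)
      (fun l _ => hapos l) hasum hzpos
    refine le_trans ?_ hexp
    rw [show S * Real.sqrt c = Real.exp (Real.log (S * Real.sqrt c)) from
      (Real.exp_log (mul_pos hSpos (Real.sqrt_pos.mpr hcpos))).symm]
    apply Real.exp_le_exp.mpr
    have hlogz : ∀ l ∈ Finset.range (L + 1), a l * Real.log (S * χ ^ l * T' l)
        = a l * Real.log S + (1 / 2) * (a l * (2 * (l : ℝ) * Real.log χ)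
          + a l * (Real.log (v' l) - dg * Real.log (h' l))) := by
      intro l hl
      have hlp : 0 < h' l := hh' l (by have := Finset.mem_range.mp hl; omega)
      rw [Real.log_mul (mul_pos hSpos (pow_pos hχpos l)).ne' (hT'pos l hl).ne',
        Real.log_mul hSpos.ne' (pow_pos hχpos l).ne', Real.log_pow, hT'def]
      simp only
      rw [Real.log_sqrt (mul_pos (hv'pos l hl) (hw'pos l hl)).le,
        Real.log_mul (hv'pos l hl).ne' (hw'pos l hl).ne', Real.log_rpow hlp]
      ring
    rw [Finset.sum_congr rfl hlogz]
    -- telescoping for the competitor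
    have harel' : ∀ l, l < L → a (l + 1) * q2 = a l * dg := fun l _ => harel l
    have hvrec' : ∀ l, l < L → Real.log (v' (l + 1)) = Real.log Q_S + q2 * Real.log (h' l) := by
      intro l hl
      rw [hv's l, Real.log_mul hQS.ne' (Real.rpow_pos_of_pos (hh' l (le_of_lt hl)) _).ne',
        Real.log_rpow (hh' l (le_of_lt hl))]
    have htele' : ∑ l ∈ Finset.range (L + 1), (a l * (Real.log (v' l) - dg * Real.log (h' l)))
        = a 0 * Real.log V0 + (∑ l ∈ Finset.range L, a (l + 1)) * Real.log Q_S
          - dg * (a L * Real.log (h' L)) :=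
      mlmc_tele L a (fun l => Real.log (h' l)) (fun l => Real.log (v' l)) q2 dg
        (Real.log Q_S) harel' hvrec'
    -- telescoping for the optimal hierarchy
    have hvrec : ∀ l, l < L → Real.log (vH (l + 1)) = Real.log Q_S + q2 * Real.log (h l) := by
      intro l _
      rw [hvHs l, Real.log_mul hQS.ne' (Real.rpow_pos_of_pos (hpos l) _).ne',
        Real.log_rpow (hpos l)]
    have htele : ∑ l ∈ Finset.range (L + 1), (a l * (Real.log (vH l) - dg * Real.log (h l)))
        = a 0 * Real.log V0 + (∑ l ∈ Finset.range L, a (l + 1)) * Real.log Q_S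
          - dg * (a L * Real.log (h L)) :=
      mlmc_tele L a (fun l => Real.log (h l)) (fun l => Real.log (vH l)) q2 dg
        (Real.log Q_S) harel' hvrec
    -- each balanced term equals log c
    have hzc' : ∀ l ∈ Finset.range (L + 1),
        a l * (2 * (l : ℝ) * Real.log χ) + a l * (Real.log (vH l) - dg * Real.log (h l))
          = a l * Real.log c := by
      intro l _
      have hkey : 2 * (l : ℝ) * Real.log χ + (Real.log (vH l) - dg * Real.log (h l))
          = Real.log c := by
        match l with
        | 0 =>
          rw [hvH0, hcdef, Real.log_mul hV0.ne' (Real.rpow_pos_of_pos (hpos 0) _).ne',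
            Real.log_rpow (hpos 0)]
          push_cast
          ring
        | k + 1 =>
          have hlogzc := congrArg Real.log (hzc k)
          rw [Real.log_mul (pow_pos hχpos _).ne' (mul_pos (mul_pos hQS
              (Real.rpow_pos_of_pos (hpos k) _)) (Real.rpow_pos_of_pos (hpos (k + 1)) _)).ne',
            Real.log_mul (mul_pos hQS (Real.rpow_pos_of_pos (hpos k) _)).ne'
              (Real.rpow_pos_of_pos (hpos (k + 1)) _).ne',
            Real.log_mul hQS.ne' (Real.rpow_pos_of_pos (hpos k) _).ne',
            Real.log_pow, Real.log_rpow (hpos (k + 1)), Real.log_rpow (hpos k)] at hlogzc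
          rw [hvHs k, Real.log_mul hQS.ne' (Real.rpow_pos_of_pos (hpos k) _).ne',
            Real.log_rpow (hpos k)]
          push_cast
          push_cast at hlogzc
          linarith
      calc a l * (2 * (l : ℝ) * Real.log χ) + a l * (Real.log (vH l) - dg * Real.log (h l))
          = a l * (2 * (l : ℝ) * Real.log χ + (Real.log (vH l) - dg * Real.log (h l))) := by
            ring
        _ = a l * Real.log c := by rw [hkey]
    have hlogc : Real.log c
        = (∑ l ∈ Finset.range (L + 1), a l * (2 * (l : ℝ) * Real.log χ))
          + (a 0 * Real.log V0
            + (∑ l ∈ Finset.range L, a (l + 1)) * Real.log Q_S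
            - dg * (a L * Real.log (h L))) := by
      have h1 : ∑ l ∈ Finset.range (L + 1), a l * Real.log c = Real.log c := by
        rw [← Finset.sum_mul, hasum, one_mul]
      rw [← h1, ← Finset.sum_congr rfl hzc', Finset.sum_add_distrib, htele]
    have hlogA : Real.log (h' L) ≤ Real.log (h L) := by
      have h'Lpos : 0 < h' L := hh' L le_rfl
      have hle : h' L ≤ A := by
        have h1 : h' L ^ q1 ≤ (1 - θ) * tol / Q_W := (le_div_iff₀' hQW).mpr hbias'
        calc h' L = (h' L ^ q1) ^ (1 / q1) := by
              rw [← Real.rpow_mul h'Lpos.le, mul_one_div, div_self hq1.ne', Real.rpow_one]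
          _ ≤ ((1 - θ) * tol / Q_W) ^ (1 / q1) :=
              Real.rpow_le_rpow (Real.rpow_pos_of_pos h'Lpos _).le h1 (by positivity)
          _ = A := by rw [hAdef]
      rw [hhL]
      exact (Real.log_le_log_iff h'Lpos (hhL ▸ hpos L)).mpr hle
    have hmain : Real.log c ≤ ∑ l ∈ Finset.range (L + 1),
        (a l * (2 * (l : ℝ) * Real.log χ)
          + a l * (Real.log (v' l) - dg * Real.log (h' l))) := by
      rw [Finset.sum_add_distrib, htele', hlogc]
      have hmono : dg * (a L * Real.log (h' L)) ≤ dg * (a L * Real.log (h L)) :=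
        mul_le_mul_of_nonneg_left (mul_le_mul_of_nonneg_left hlogA (hapos L).le) hdgpos.le
      linarith
    rw [Real.log_mul hSpos.ne' (Real.sqrt_pos.mpr hcpos).ne', Real.log_sqrt hcpos.le]
    have hS1 : ∑ l ∈ Finset.range (L + 1), a l * Real.log S = Real.log S := by
      rw [← Finset.sum_mul, hasum, one_mul]
    have hfin : ∑ l ∈ Finset.range (L + 1),
        (a l * Real.log S + (1 / 2) * (a l * (2 * (l : ℝ) * Real.log χ)
          + a l * (Real.log (v' l) - dg * Real.log (h' l))))
        = Real.log S + (1 / 2) * ∑ l ∈ Finset.range (L + 1),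
            (a l * (2 * (l : ℝ) * Real.log χ)
              + a l * (Real.log (v' l) - dg * Real.log (h' l))) := by
      rw [Finset.sum_add_distrib, hS1, Finset.mul_sum]
    rw [hfin]
    linarith
  -- finish
  have hT'sum_nonneg : 0 ≤ ∑ l ∈ Finset.range (L + 1), T' l :=
    Finset.sum_nonneg fun l hl => (hT'pos l hl).le
  have hW'nonneg : 0 ≤ ∑ l ∈ Finset.range (L + 1), M' l * h' l ^ (-dg) :=
    Finset.sum_nonneg fun l hl =>
      (mul_pos (hM' l (by have := Finset.mem_range.mp hl; omega)) (hw'pos l hl)).le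
  have hchain : S * S * c ≤ ε2 * ∑ l ∈ Finset.range (L + 1), M' l * h' l ^ (-dg) := by
    have h1 : (S * Real.sqrt c) ^ 2 ≤ (∑ l ∈ Finset.range (L + 1), T' l) ^ 2 :=
      pow_le_pow_left₀ (mul_pos hSpos (Real.sqrt_pos.mpr hcpos)).le hAMGM 2
    have h2 : (S * Real.sqrt c) ^ 2 = S * S * c := by
      rw [mul_pow, Real.sq_sqrt hcpos.le]; ring
    have h3 : (∑ l ∈ Finset.range (L + 1), v' l / M' l)
        * (∑ l ∈ Finset.range (L + 1), M' l * h' l ^ (-dg))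
        ≤ ε2 * ∑ l ∈ Finset.range (L + 1), M' l * h' l ^ (-dg) :=
      mul_le_mul_of_nonneg_right hvsum hW'nonneg
    calc S * S * c = (S * Real.sqrt c) ^ 2 := h2.symm
      _ ≤ (∑ l ∈ Finset.range (L + 1), T' l) ^ 2 := h1
      _ ≤ _ := le_trans hCS h3
  rw [hwork]
  rw [div_le_iff₀ hε2]
  calc S * S * c ≤ ε2 * ∑ l ∈ Finset.range (L + 1), M' l * h' l ^ (-dg) := hchain
    _ = (∑ l ∈ Finset.range (L + 1), M' l * h' l ^ (-dg)) * ε2 := mul_comm _ _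
end

section
/- Assume chi in (0,1) and eta > 0. For tol in (0,1) define L(tol) by L(tol)+1 = (1/c2)*(log(1/tol) + c1 + log(1 + 2*eta/(1-chi))), where c1 = log(V_0^{eta/chi} * Q_S^{-eta/chi} * Q_W) and c2 = 2*eta*log(chi)/(chi-1). Then W(L(tol),tol) * tol^{2*(1 + (1-chi)/(2*eta))} tends, as tol -> 0+, to the constant C1 = C_alpha^2 * Q_S * Q_W^{(1-chi)/eta} * chi^{-2*chi/(1-chi)} * (1/(2*eta))^2 * (1 + 2*eta/(1-chi))^{2*(1 + (1-chi)/(2*eta))}. -/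
/-!
In `W(L, tol) · tol^{2 + (1-χ)/η}` the tolerance survives only in the factor
`tol^{-(1-χ)/η · s/(1-s)} = exp((1-χ)/η · log(1/tol) · s/(1-s))` with `s = χ^{L+1}`.
Along the chosen `L(tol)`, `log(1/tol)` is affine in `L + 1`, so this exponent is
`O((L+1) χ^{L+1}) → 0`. The remaining factors `w₂(L)`, `w₃(L)` converge as `L → ∞`,
since `χ^L → 0` and `L χ^{L+1} → 0`, and their limits multiply to `C₁`.
-/

open Filter Topology Real

namespace MLMC

theorem tendsto_mul_rpow_atTop_of_lt_one {b : ℝ} (hb0 : 0 < b) (hb1 : b < 1) :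
    Tendsto (fun x : ℝ => x * b ^ x) atTop (𝓝 0) := by
  refine (tendsto_rpow_mul_exp_neg_mul_atTop_nhds_zero 1 (-log b)
    (neg_pos.2 (log_neg hb0 hb1))).congr fun x => ?_
  rw [rpow_one, rpow_def_of_pos hb0, neg_neg, mul_comm (log b)]

theorem rpow_neg_two_add_div_mul_rpow_two_add {t : ℝ} (ht : 0 < t) {s : ℝ} (hs : s ≠ 1)
    (a : ℝ) : t ^ (-(2 + a / (1 - s))) * t ^ (2 + a) = exp (a * (-log t * s) / (1 - s)) := by
  have : 1 - s ≠ 0 := sub_ne_zero.2 hs.symm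
  rw [← rpow_add ht, rpow_def_of_pos ht]
  congr 1
  field_simp
  ring

theorem tendsto_atTop_of_add_one_eq_log_one_div {L : ℝ → ℝ} {c C : ℝ} (hc : 0 < c)
    (hL : ∀ tol, L tol + 1 = 1 / c * (log (1 / tol) + C)) : Tendsto L (𝓝[>] 0) atTop := by
  have hu : Tendsto (fun tol : ℝ => log tol⁻¹) (𝓝[>] 0) atTop :=
    tendsto_log_atTop.comp tendsto_inv_nhdsGT_zero
  have h : Tendsto (fun tol => L tol + 1) (𝓝[>] 0) atTop :=
    ((tendsto_atTop_add_const_right _ C hu).const_mul_atTop (one_div_pos.2 hc)).congr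
      fun tol => by rw [hL, one_div tol]
  simpa using tendsto_atTop_add_const_right _ (-1) h

section LevelLimits

variable {χ : ℝ}

theorem tendsto_rpow_add_one_atTop (h0 : 0 < χ) (h1 : χ < 1) :
    Tendsto (fun L : ℝ => χ ^ (L + 1)) atTop (𝓝 0) :=
  (tendsto_rpow_atTop_of_base_lt_one χ (by linarith) h1).comp
    (tendsto_atTop_add_const_right _ 1 tendsto_id)

theorem tendsto_one_sub_rpow_add_one_atTop (h0 : 0 < χ) (h1 : χ < 1) :
    Tendsto (fun L : ℝ => 1 - χ ^ (L + 1)) atTop (𝓝 1) := by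
  simpa using (tendsto_rpow_add_one_atTop h0 h1).const_sub 1

theorem tendsto_affine_mul_rpow_add_one_atTop (h0 : 0 < χ) (h1 : χ < 1) (c d : ℝ) :
    Tendsto (fun L : ℝ => (c * (L + 1) - d) * χ ^ (L + 1)) atTop (𝓝 0) := by
  have hx := (tendsto_mul_rpow_atTop_of_lt_one h0 h1).comp
    (tendsto_atTop_add_const_right _ 1 tendsto_id)
  simpa [sub_mul, mul_assoc] using
    (hx.const_mul c).sub ((tendsto_rpow_add_one_atTop h0 h1).const_mul d)

theorem tendsto_exp_affine_mul_rpow_add_one_atTop (h0 : 0 < χ) (h1 : χ < 1) (a c d : ℝ) :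
    Tendsto (fun L : ℝ => exp (a * ((c * (L + 1) - d) * χ ^ (L + 1)) / (1 - χ ^ (L + 1))))
      atTop (𝓝 1) := by
  have h : Tendsto (fun L : ℝ => a * ((c * (L + 1) - d) * χ ^ (L + 1)) / (1 - χ ^ (L + 1)))
      atTop (𝓝 (a * 0 / 1)) :=
    ((tendsto_affine_mul_rpow_add_one_atTop h0 h1 c d).const_mul a).div
      (tendsto_one_sub_rpow_add_one_atTop h0 h1) one_ne_zero
  simpa [Function.comp_def] using (continuous_exp.tendsto _).comp h

end LevelLimits

variable (χ eta : ℝ)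

noncomputable def w2 (Q_W Q_S V0 C_alpha L : ℝ) : ℝ :=
  C_alpha ^ 2 * V0 * (Q_S / V0) ^ ((1 - χ ^ L) / (1 - χ ^ (L + 1)))
    * Q_W ^ ((1 / eta) * (1 - χ) / (1 - χ ^ (L + 1)))
    * χ ^ (-(2 * χ / (1 - χ)) * (1 - χ ^ L) / (1 - χ ^ (L + 1))
        + 2 * L * χ ^ (L + 1) / (1 - χ ^ (L + 1)))

noncomputable def w3 (L : ℝ) : ℝ :=
  (1 / (2 * eta)) ^ 2
    * (1 + 2 * eta * (1 - χ ^ (L + 1)) / (1 - χ))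
        ^ (2 * (1 + (1 / (2 * eta)) * (1 - χ) / (1 - χ ^ (L + 1))))

variable {χ eta}

theorem tendsto_w2_atTop {Q_W Q_S V0 C_alpha : ℝ} (h0 : 0 < χ) (h1 : χ < 1) (heta : 0 < eta)
    (hV0 : V0 ≠ 0) :
    Tendsto (w2 χ eta Q_W Q_S V0 C_alpha) atTop
      (𝓝 (C_alpha ^ 2 * Q_S * Q_W ^ ((1 - χ) / eta) * χ ^ (-(2 * χ) / (1 - χ)))) := by
  have hs := tendsto_one_sub_rpow_add_one_atTop h0 h1
  have ht : Tendsto (fun L : ℝ => 1 - χ ^ L) atTop (𝓝 1) := by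
    simpa using (tendsto_rpow_atTop_of_base_lt_one χ (by linarith) h1).const_sub 1
  have hLs : Tendsto (fun L : ℝ => 2 * L * χ ^ (L + 1)) atTop (𝓝 0) :=
    (tendsto_affine_mul_rpow_add_one_atTop h0 h1 2 2).congr fun L => by ring
  have hQS : Tendsto (fun L : ℝ => (Q_S / V0) ^ ((1 - χ ^ L) / (1 - χ ^ (L + 1)))) atTop
      (𝓝 ((Q_S / V0) ^ (1 / 1 : ℝ))) :=
    tendsto_const_nhds.rpow (ht.div hs one_ne_zero) (Or.inr (by norm_num))
  have hQW : Tendsto (fun L : ℝ => Q_W ^ ((1 / eta) * (1 - χ) / (1 - χ ^ (L + 1)))) atTop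
      (𝓝 (Q_W ^ ((1 / eta) * (1 - χ) / 1))) :=
    tendsto_const_nhds.rpow (tendsto_const_nhds.div hs one_ne_zero)
      (Or.inr (div_pos (mul_pos (one_div_pos.2 heta) (sub_pos.2 h1)) one_pos))
  have hχ : Tendsto (fun L : ℝ => χ ^ (-(2 * χ / (1 - χ)) * (1 - χ ^ L) / (1 - χ ^ (L + 1))
        + 2 * L * χ ^ (L + 1) / (1 - χ ^ (L + 1)))) atTop
      (𝓝 (χ ^ (-(2 * χ / (1 - χ)) * 1 / 1 + 0 / 1))) :=
    tendsto_const_nhds.rpow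
      (((ht.const_mul _).div hs one_ne_zero).add (hLs.div hs one_ne_zero)) (Or.inl h0.ne')
  convert ((tendsto_const_nhds (x := C_alpha ^ 2 * V0)).mul hQS).mul hQW |>.mul hχ using 1
  · rfl
  rw [div_one, rpow_one, mul_assoc (C_alpha ^ 2) V0, mul_div_cancel₀ Q_S hV0]
  congr 4 <;> ring

theorem tendsto_w3_atTop (h0 : 0 < χ) (h1 : χ < 1) (heta : 0 ≤ eta) :
    Tendsto (w3 χ eta) atTop
      (𝓝 ((1 / (2 * eta)) ^ 2
        * (1 + 2 * eta / (1 - χ)) ^ (2 * (1 + (1 - χ) / (2 * eta))))) := by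
  have hs := tendsto_one_sub_rpow_add_one_atTop h0 h1
  have hbase : Tendsto (fun L : ℝ => 1 + 2 * eta * (1 - χ ^ (L + 1)) / (1 - χ)) atTop
      (𝓝 (1 + 2 * eta * 1 / (1 - χ))) :=
    ((hs.const_mul _).div_const _).const_add 1
  have hexp : Tendsto (fun L : ℝ => 2 * (1 + (1 / (2 * eta)) * (1 - χ) / (1 - χ ^ (L + 1))))
      atTop (𝓝 (2 * (1 + (1 / (2 * eta)) * (1 - χ) / 1))) :=
    ((tendsto_const_nhds.div hs one_ne_zero).const_add 1).const_mul 2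
  have hpos : 0 < 1 + 2 * eta * 1 / (1 - χ) := by
    have := sub_pos.2 h1
    positivity
  convert (hbase.rpow hexp (Or.inl hpos.ne')).const_mul ((1 / (2 * eta)) ^ 2) using 1
  · rfl
  congr 3 <;> ring

end MLMC

theorem mlmc_asymptotic_work_chi_lt_one_general
    (χ eta Q_W Q_S V0 C_alpha : ℝ)
    (hχpos : 0 < χ) (hχ1 : χ < 1) (heta : 0 < eta)
    (hV0 : 0 < V0)
    (W : ℝ → ℝ → ℝ)
    (hW : ∀ L tol : ℝ, W L tol =
      tol ^ (-(2 + (1 / eta) * (1 - χ) / (1 - χ ^ (L + 1))))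
        * (C_alpha ^ 2 * V0 * (Q_S / V0) ^ ((1 - χ ^ L) / (1 - χ ^ (L + 1)))
            * Q_W ^ ((1 / eta) * (1 - χ) / (1 - χ ^ (L + 1)))
            * χ ^ (-(2 * χ / (1 - χ)) * (1 - χ ^ L) / (1 - χ ^ (L + 1))
                + 2 * L * χ ^ (L + 1) / (1 - χ ^ (L + 1))))
        * ((1 / (2 * eta)) ^ 2
            * (1 + 2 * eta * (1 - χ ^ (L + 1)) / (1 - χ))
                ^ (2 * (1 + (1 / (2 * eta)) * (1 - χ) / (1 - χ ^ (L + 1))))))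
    (c1 c2 : ℝ)
    (hc2 : c2 = 2 * eta * Real.log χ / (χ - 1))
    (Lf : ℝ → ℝ)
    (hLf : ∀ tol : ℝ, Lf tol + 1 =
      (1 / c2) * (Real.log (1 / tol) + c1 + Real.log (1 + 2 * eta / (1 - χ)))) :
    Tendsto
      (fun tol => W (Lf tol) tol * tol ^ (2 * (1 + (1 - χ) / (2 * eta))))
      (nhdsWithin 0 (Set.Ioi 0))
      (nhds (C_alpha ^ 2 * Q_S * Q_W ^ ((1 - χ) / eta)
        * χ ^ (-(2 * χ) / (1 - χ)) * (1 / (2 * eta)) ^ 2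
        * (1 + 2 * eta / (1 - χ)) ^ (2 * (1 + (1 - χ) / (2 * eta))))) := by
  set C := c1 + log (1 + 2 * eta / (1 - χ))
  have hc2pos : 0 < c2 := hc2 ▸ div_pos_of_neg_of_neg
    (mul_neg_of_pos_of_neg (by positivity) (log_neg hχpos hχ1)) (by linarith)
  have hlog : ∀ tol, -log tol = c2 * (Lf tol + 1) - C := fun tol => by
    rw [hLf, one_div tol, log_inv]
    field_simp
    ring
  have hLtop : Tendsto Lf (𝓝[>] 0) atTop :=
    MLMC.tendsto_atTop_of_add_one_eq_log_one_div hc2pos fun tol => by rw [hLf, add_assoc]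
  have hexp : 2 * (1 + (1 - χ) / (2 * eta)) = 2 + 1 / eta * (1 - χ) := by
    field_simp
  have hlim :=
    (((MLMC.tendsto_exp_affine_mul_rpow_add_one_atTop hχpos hχ1 ((1 - χ) / eta) c2 C).mul
      (MLMC.tendsto_w2_atTop (Q_W := Q_W) (Q_S := Q_S) (C_alpha := C_alpha) hχpos hχ1 heta
        hV0.ne')).mul (MLMC.tendsto_w3_atTop hχpos hχ1 heta.le)).comp hLtop
  rw [one_mul, ← mul_assoc] at hlim
  refine hlim.congr' ?_
  filter_upwards [self_mem_nhdsWithin, hLtop.eventually_gt_atTop (-1)] with tol htol hL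
  have hs : χ ^ (Lf tol + 1) ≠ 1 := (rpow_lt_one hχpos.le hχ1 (by linarith)).ne
  symm
  calc W (Lf tol) tol * tol ^ (2 * (1 + (1 - χ) / (2 * eta)))
      = tol ^ (-(2 + 1 / eta * (1 - χ) / (1 - χ ^ (Lf tol + 1)))) * tol ^ (2 + 1 / eta * (1 - χ))
        * MLMC.w2 χ eta Q_W Q_S V0 C_alpha (Lf tol) * MLMC.w3 χ eta (Lf tol) := by
        rw [hW, hexp]
        unfold MLMC.w2 MLMC.w3
        ring
    _ = _ := by
        rw [MLMC.rpow_neg_two_add_div_mul_rpow_two_add htol hs, hlog, one_div_mul_eq_div]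
        rfl

/-- Corollary 2.2 (χ < 1): with `L(tol)` chosen as the upper bound of (2.21),
`W(L(tol),tol) * tol^{2(1+(1-χ)/(2η))} → C₁` as `tol → 0⁺`. -/
theorem mlmc_asymptotic_work_chi_lt_one
    (χ eta Q_W Q_S V0 C_alpha : ℝ)
    (hχpos : 0 < χ) (hχ1 : χ < 1) (heta : 0 < eta)
    (hQW : 0 < Q_W) (hQS : 0 < Q_S) (hV0 : 0 < V0) (hCα : 0 < C_alpha)
    (W : ℝ → ℝ → ℝ)
    (hW : ∀ L tol : ℝ, W L tol =
      tol ^ (-(2 + (1 / eta) * (1 - χ) / (1 - χ ^ (L + 1))))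
        * (C_alpha ^ 2 * V0 * (Q_S / V0) ^ ((1 - χ ^ L) / (1 - χ ^ (L + 1)))
            * Q_W ^ ((1 / eta) * (1 - χ) / (1 - χ ^ (L + 1)))
            * χ ^ (-(2 * χ / (1 - χ)) * (1 - χ ^ L) / (1 - χ ^ (L + 1))
                + 2 * L * χ ^ (L + 1) / (1 - χ ^ (L + 1))))
        * ((1 / (2 * eta)) ^ 2
            * (1 + 2 * eta * (1 - χ ^ (L + 1)) / (1 - χ))
                ^ (2 * (1 + (1 / (2 * eta)) * (1 - χ) / (1 - χ ^ (L + 1))))))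
    (c1 c2 : ℝ)
    (hc1 : c1 = Real.log (V0 ^ (eta / χ) * Q_S ^ (-(eta / χ)) * Q_W))
    (hc2 : c2 = 2 * eta * Real.log χ / (χ - 1))
    (Lf : ℝ → ℝ)
    (hLf : ∀ tol : ℝ, Lf tol + 1 =
      (1 / c2) * (Real.log (1 / tol) + c1 + Real.log (1 + 2 * eta / (1 - χ)))) :
    Tendsto
      (fun tol => W (Lf tol) tol * tol ^ (2 * (1 + (1 - χ) / (2 * eta))))
      (nhdsWithin 0 (Set.Ioi 0))
      (nhds (C_alpha ^ 2 * Q_S * Q_W ^ ((1 - χ) / eta)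
        * χ ^ (-(2 * χ) / (1 - χ)) * (1 / (2 * eta)) ^ 2
        * (1 + 2 * eta / (1 - χ)) ^ (2 * (1 + (1 - χ) / (2 * eta))))) :=
  mlmc_asymptotic_work_chi_lt_one_general χ eta Q_W Q_S V0 C_alpha hχpos hχ1 heta hV0 W hW c1 c2 hc2
    Lf hLf
end

section
/- Assume chi > 1 and eta > 0. For tol in (0,1) define L(tol) by L(tol)+1 = (chi/c2)*(log(1/tol) + c1 + log(2*eta/(chi-1))), where c1 = log(V_0^{eta/chi} * Q_S^{-eta/chi} * Q_W) and c2 = 2*eta*log(chi)/(chi-1). Then W(L(tol),tol) * tol^{2} tends, as tol -> 0+, to the constant C2 = C_alpha^2 * V_0^{(chi-1)/chi} * Q_S^{1/chi} * chi^{2*chi/(chi-1)} * (chi-1)^{-2}. -/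
/-! Put `x = L + 1`; the choice of `L(tol)` makes `log (1 / tol)` affine in `x`. Then
`log (W tol² / C_α²)` is a constant, plus `(1 - χ^(x-1)) / (1 - χ^x) → 1/χ` times a constant, plus
`2 log (B / χ^x)` with `B = 1 + 2η(1 - χ^x)/(1 - χ)` and `B / χ^x → 2η/(χ - 1)`, plus
`(1 - χ) / (1 - χ^x)` times a quantity growing at most linearly in `x`; since `χ > 1` the last
term tends to `0`. -/

open Filter Real Topology

section RpowAsymptotics

variable {b : ℝ}

lemma tendsto_self_div_rpow_of_one_lt (hb : 1 < b) :
    Tendsto (fun x : ℝ => x / b ^ x) atTop (𝓝 0) := by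
  refine (tendsto_rpow_mul_exp_neg_mul_atTop_nhds_zero 1 (log b) (log_pos hb)).congr fun x => ?_
  rw [rpow_one, rpow_def_of_pos (by linarith), neg_mul, exp_neg, div_eq_mul_inv]

lemma tendsto_rpow_div_one_sub_rpow (hb : 1 < b) :
    Tendsto (fun x : ℝ => b ^ x / (1 - b ^ x)) atTop (𝓝 (-1)) := by
  have h := (tendsto_inv_atTop_zero.comp (tendsto_rpow_atTop_of_base_gt_one b hb)).sub_const 1
  rw [zero_sub] at h
  have h' := h.inv₀ (by norm_num)
  rw [inv_neg, inv_one] at h'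
  refine h'.congr fun x => ?_
  have : b ^ x ≠ 0 := (rpow_pos_of_pos (by linarith) x).ne'
  simp only [Function.comp_apply]
  field_simp

lemma tendsto_affine_div_one_sub_rpow (hb : 1 < b) (p q : ℝ) :
    Tendsto (fun x : ℝ => (p * x + q) / (1 - b ^ x)) atTop (𝓝 0) := by
  have hinv := tendsto_inv_atTop_zero.comp (tendsto_rpow_atTop_of_base_gt_one b hb)
  have h := (((tendsto_self_div_rpow_of_one_lt hb).const_mul p).add (hinv.const_mul q)).mul
    (tendsto_rpow_div_one_sub_rpow hb)
  rw [mul_zero, mul_zero, add_zero, zero_mul] at h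
  refine h.congr fun x => ?_
  have : b ^ x ≠ 0 := (rpow_pos_of_pos (by linarith) x).ne'
  simp only [Function.comp_apply]
  field_simp

lemma tendsto_const_div_one_sub_rpow (hb : 1 < b) (c : ℝ) :
    Tendsto (fun x : ℝ => c / (1 - b ^ x)) atTop (𝓝 0) := by
  simpa using tendsto_affine_div_one_sub_rpow hb 0 c

lemma tendsto_one_sub_rpow_sub_one_div_one_sub_rpow (hb : 1 < b) :
    Tendsto (fun x : ℝ => (1 - b ^ (x - 1)) / (1 - b ^ x)) atTop (𝓝 b⁻¹) := by
  have h := (tendsto_const_div_one_sub_rpow hb 1).sub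
    ((tendsto_rpow_div_one_sub_rpow hb).const_mul b⁻¹)
  rw [zero_sub, mul_neg_one, neg_neg] at h
  refine h.congr fun x => ?_
  rw [rpow_sub_one (by linarith)]
  ring

lemma tendsto_one_add_mul_one_sub_rpow_div_rpow (hb : 1 < b) (k : ℝ) :
    Tendsto (fun x : ℝ => (1 + k * (1 - b ^ x)) / b ^ x) atTop (𝓝 (-k)) := by
  have h := ((tendsto_inv_atTop_zero.comp
    (tendsto_rpow_atTop_of_base_gt_one b hb)).const_mul (1 + k)).sub_const k
  rw [mul_zero, zero_sub] at h
  refine h.congr fun x => ?_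
  have : b ^ x ≠ 0 := (rpow_pos_of_pos (by linarith) x).ne'
  simp only [Function.comp_apply]
  field_simp
  ring

end RpowAsymptotics

noncomputable def mlmcWork (χ eta Q_W Q_S V0 C_alpha L tol : ℝ) : ℝ :=
  tol ^ (-(2 + (1 / eta) * (1 - χ) / (1 - χ ^ (L + 1))))
    * (C_alpha ^ 2 * V0 * (Q_S / V0) ^ ((1 - χ ^ L) / (1 - χ ^ (L + 1)))
        * Q_W ^ ((1 / eta) * (1 - χ) / (1 - χ ^ (L + 1)))
        * χ ^ (-(2 * χ / (1 - χ)) * (1 - χ ^ L) / (1 - χ ^ (L + 1))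
            + 2 * L * χ ^ (L + 1) / (1 - χ ^ (L + 1))))
    * ((1 / (2 * eta)) ^ 2
        * (1 + 2 * eta * (1 - χ ^ (L + 1)) / (1 - χ))
            ^ (2 * (1 + (1 / (2 * eta)) * (1 - χ) / (1 - χ ^ (L + 1)))))

lemma mlmcWork_eq_sq_mul (χ eta Q_W Q_S V0 C_alpha L tol : ℝ) :
    mlmcWork χ eta Q_W Q_S V0 C_alpha L tol
      = C_alpha ^ 2 * mlmcWork χ eta Q_W Q_S V0 1 L tol := by
  unfold mlmcWork
  ring

noncomputable def mlmcLogWork (χ eta Q_W Q_S V0 p q x : ℝ) : ℝ :=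
  log (V0 * (χ / (2 * eta)) ^ 2)
    + (1 - χ ^ (x - 1)) / (1 - χ ^ x) * log (Q_S / V0 * χ ^ (2 * χ / (χ - 1)))
    + 2 * log ((1 + 2 * eta * (1 - χ ^ x) / (1 - χ)) / χ ^ x)
    + (1 - χ) / (1 - χ ^ x)
      * ((p / eta + log χ / eta - 2 * log χ / (χ - 1)) * x
          + (log Q_W - q) / eta + 2 * log χ / (χ - 1)
          + log ((1 + 2 * eta * (1 - χ ^ x) / (1 - χ)) / χ ^ x) / eta)

lemma mlmcWork_one_mul_rpow_two_eq_exp {χ eta Q_W Q_S V0 x : ℝ} (hχ : 1 < χ) (heta : 0 < eta)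
    (hQW : 0 < Q_W) (hQS : 0 < Q_S) (hV0 : 0 < V0) (hx : 0 < x) (p q : ℝ) :
    mlmcWork χ eta Q_W Q_S V0 1 (x - 1) (exp (q - p * x)) * exp (q - p * x) ^ (2 : ℝ)
      = exp (mlmcLogWork χ eta Q_W Q_S V0 p q x) := by
  have hχ0 : 0 < χ := by linarith
  have hE : 1 < χ ^ x := one_lt_rpow hχ hx
  have hE0 : 1 - χ ^ x ≠ 0 := by linarith
  have h1χ : 1 - χ ≠ 0 := by linarith
  have hχ1 : χ - 1 ≠ 0 := by linarith
  have hB : 0 < 1 + 2 * eta * (1 - χ ^ x) / (1 - χ) := by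
    have : 0 < 2 * eta * (1 - χ ^ x) / (1 - χ) :=
      div_pos_of_neg_of_neg (by nlinarith) (by linarith)
    linarith
  have hlogR : log ((1 + 2 * eta * (1 - χ ^ x) / (1 - χ)) / χ ^ x)
      = log (1 + 2 * eta * (1 - χ ^ x) / (1 - χ)) - x * log χ := by
    rw [log_div hB.ne' (by positivity), log_rpow hχ0]
  unfold mlmcWork mlmcLogWork
  rw [sub_add_cancel, rpow_sub_one hχ0.ne', hlogR]
  generalize χ ^ x = E at hE0 hB ⊢
  rw [← exp_mul, ← exp_mul,
    rpow_def_of_pos (div_pos hQS hV0), rpow_def_of_pos hQW, rpow_def_of_pos hχ0,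
    rpow_def_of_pos hB, log_mul (by positivity) (by positivity),
    log_mul (by positivity) (by positivity), log_rpow hχ0, log_div hQS.ne' hV0.ne', log_pow,
    log_div hχ0.ne' (by positivity), one_pow, one_mul, ← exp_log hV0,
    ← exp_log (by positivity : 0 < (1 / (2 * eta)) ^ 2)]
  simp only [log_exp, log_pow, one_div, log_inv, ← exp_add]
  congr 1
  field_simp
  ring

lemma tendsto_mlmcLogWork {χ eta Q_W Q_S V0 : ℝ} (hχ : 1 < χ) (heta : 0 < eta)
    (hQS : 0 < Q_S) (hV0 : 0 < V0) (p q : ℝ) :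
    Tendsto (mlmcLogWork χ eta Q_W Q_S V0 p q) atTop
      (𝓝 (log (V0 ^ ((χ - 1) / χ) * Q_S ^ (1 / χ) * χ ^ (2 * χ / (χ - 1))
        * (χ - 1) ^ (-2 : ℝ)))) := by
  have hχ0 : 0 < χ := by linarith
  have hχ1 : 0 < χ - 1 := by linarith
  have hR : Tendsto (fun x : ℝ => (1 + 2 * eta * (1 - χ ^ x) / (1 - χ)) / χ ^ x) atTop
      (𝓝 (2 * eta / (χ - 1))) := by
    have hk : 2 * eta / (χ - 1) = -(2 * eta / (1 - χ)) := by rw [← div_neg, neg_sub]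
    rw [hk]
    simpa only [mul_div_right_comm] using
      tendsto_one_add_mul_one_sub_rpow_div_rpow hχ (2 * eta / (1 - χ))
  have hlogR := (continuousAt_log (by positivity)).tendsto.comp hR
  set P := p / eta + log χ / eta - 2 * log χ / (χ - 1)
  set Q := (log Q_W - q) / eta + 2 * log χ / (χ - 1)
  have htail := (tendsto_affine_div_one_sub_rpow hχ ((1 - χ) * P) ((1 - χ) * Q)).add
    ((tendsto_const_div_one_sub_rpow hχ (1 - χ)).mul (hlogR.div_const eta))
  have h := (((tendsto_const_nhds (x := log (V0 * (χ / (2 * eta)) ^ 2))).add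
    ((tendsto_one_sub_rpow_sub_one_div_one_sub_rpow hχ).mul_const
      (log (Q_S / V0 * χ ^ (2 * χ / (χ - 1)))))).add (hlogR.const_mul 2)).add htail
  rw [zero_mul, add_zero, add_zero] at h
  convert h using 1
  · funext x
    simp only [mlmcLogWork, Function.comp_apply]
    ring
  · congr 1
    simp (disch := positivity) only [log_mul, log_div, log_rpow, log_pow]
    field_simp
    ring

lemma tendsto_mlmcWork_mul_rpow_two {χ eta Q_W Q_S V0 : ℝ} (hχ : 1 < χ) (heta : 0 < eta)
    (hQW : 0 < Q_W) (hQS : 0 < Q_S) (hV0 : 0 < V0) (C_alpha p q : ℝ) :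
    Tendsto (fun x => mlmcWork χ eta Q_W Q_S V0 C_alpha (x - 1) (exp (q - p * x))
        * exp (q - p * x) ^ (2 : ℝ)) atTop
      (𝓝 (C_alpha ^ 2 * V0 ^ ((χ - 1) / χ) * Q_S ^ (1 / χ) * χ ^ (2 * χ / (χ - 1))
        * (χ - 1) ^ (-2 : ℝ))) := by
  have hχ1 : 0 < χ - 1 := by linarith
  have h := ((continuous_exp.tendsto _).comp
    (tendsto_mlmcLogWork (Q_W := Q_W) hχ heta hQS hV0 p q)).const_mul (C_alpha ^ 2)
  rw [exp_log (by positivity)] at h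
  simp only [← mul_assoc] at h
  refine h.congr' ?_
  filter_upwards [eventually_gt_atTop 0] with x hx
  rw [Function.comp_apply, mlmcWork_eq_sq_mul, mul_assoc,
    mlmcWork_one_mul_rpow_two_eq_exp hχ heta hQW hQS hV0 hx]

theorem mlmc_asymptotic_work_chi_gt_one_general
    (χ eta Q_W Q_S V0 C_alpha : ℝ)
    (hχ1 : 1 < χ) (heta : 0 < eta)
    (hQW : 0 < Q_W) (hQS : 0 < Q_S) (hV0 : 0 < V0)
    (W : ℝ → ℝ → ℝ)
    (hW : ∀ L tol : ℝ, W L tol =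
      tol ^ (-(2 + (1 / eta) * (1 - χ) / (1 - χ ^ (L + 1))))
        * (C_alpha ^ 2 * V0 * (Q_S / V0) ^ ((1 - χ ^ L) / (1 - χ ^ (L + 1)))
            * Q_W ^ ((1 / eta) * (1 - χ) / (1 - χ ^ (L + 1)))
            * χ ^ (-(2 * χ / (1 - χ)) * (1 - χ ^ L) / (1 - χ ^ (L + 1))
                + 2 * L * χ ^ (L + 1) / (1 - χ ^ (L + 1))))
        * ((1 / (2 * eta)) ^ 2
            * (1 + 2 * eta * (1 - χ ^ (L + 1)) / (1 - χ))
                ^ (2 * (1 + (1 / (2 * eta)) * (1 - χ) / (1 - χ ^ (L + 1))))))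
    (c1 c2 : ℝ)
    (hc2 : c2 = 2 * eta * Real.log χ / (χ - 1))
    (Lf : ℝ → ℝ)
    (hLf : ∀ tol : ℝ, Lf tol + 1 =
      (χ / c2) * (Real.log (1 / tol) + c1 + Real.log (2 * eta / (χ - 1)))) :
    Tendsto (fun tol => W (Lf tol) tol * tol ^ (2 : ℝ))
      (nhdsWithin 0 (Set.Ioi 0))
      (nhds (C_alpha ^ 2 * V0 ^ ((χ - 1) / χ) * Q_S ^ (1 / χ)
        * χ ^ (2 * χ / (χ - 1)) * (χ - 1) ^ (-2 : ℝ))) := by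
  have hc2pos : 0 < c2 := hc2 ▸ div_pos (by nlinarith [log_pos hχ1]) (by linarith)
  set A := c1 + log (2 * eta / (χ - 1))
  have hLf' (tol : ℝ) : Lf tol + 1 = χ / c2 * (-log tol + A) := by
    rw [hLf, one_div, log_inv, add_assoc]
  have hx : Tendsto (fun tol => Lf tol + 1) (𝓝[>] 0) atTop := by
    simp only [hLf']
    exact (tendsto_atTop_add_const_right _ A
      (tendsto_neg_atBot_atTop.comp tendsto_log_nhdsGT_zero)).const_mul_atTop (by positivity)
  refine ((tendsto_mlmcWork_mul_rpow_two hχ1 heta hQW hQS hV0 C_alpha (c2 / χ) A).comp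
    hx).congr' ?_
  filter_upwards [self_mem_nhdsWithin] with tol htol
  have htol_eq : exp (A - c2 / χ * (Lf tol + 1)) = tol := by
    have hcancel : c2 / χ * (χ / c2) = 1 := by field_simp [hc2pos.ne']
    rw [hLf', ← mul_assoc, hcancel, one_mul, sub_add_cancel_right, neg_neg, exp_log htol]
  rw [Function.comp_apply, add_sub_cancel_right, htol_eq, hW, mlmcWork]

/-- Corollary 2.2 (χ > 1): with `L(tol)` chosen as the upper bound of (2.21),
`W(L(tol),tol) * tol² → C₂` as `tol → 0⁺`. -/
theorem mlmc_asymptotic_work_chi_gt_one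
    (χ eta Q_W Q_S V0 C_alpha : ℝ)
    (hχ1 : 1 < χ) (heta : 0 < eta)
    (hQW : 0 < Q_W) (hQS : 0 < Q_S) (hV0 : 0 < V0) (hCα : 0 < C_alpha)
    (W : ℝ → ℝ → ℝ)
    (hW : ∀ L tol : ℝ, W L tol =
      tol ^ (-(2 + (1 / eta) * (1 - χ) / (1 - χ ^ (L + 1))))
        * (C_alpha ^ 2 * V0 * (Q_S / V0) ^ ((1 - χ ^ L) / (1 - χ ^ (L + 1)))
            * Q_W ^ ((1 / eta) * (1 - χ) / (1 - χ ^ (L + 1)))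
            * χ ^ (-(2 * χ / (1 - χ)) * (1 - χ ^ L) / (1 - χ ^ (L + 1))
                + 2 * L * χ ^ (L + 1) / (1 - χ ^ (L + 1))))
        * ((1 / (2 * eta)) ^ 2
            * (1 + 2 * eta * (1 - χ ^ (L + 1)) / (1 - χ))
                ^ (2 * (1 + (1 / (2 * eta)) * (1 - χ) / (1 - χ ^ (L + 1))))))
    (c1 c2 : ℝ)
    (hc1 : c1 = Real.log (V0 ^ (eta / χ) * Q_S ^ (-(eta / χ)) * Q_W))
    (hc2 : c2 = 2 * eta * Real.log χ / (χ - 1))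
    (Lf : ℝ → ℝ)
    (hLf : ∀ tol : ℝ, Lf tol + 1 =
      (χ / c2) * (Real.log (1 / tol) + c1 + Real.log (2 * eta / (χ - 1)))) :
    Tendsto (fun tol => W (Lf tol) tol * tol ^ (2 : ℝ))
      (nhdsWithin 0 (Set.Ioi 0))
      (nhds (C_alpha ^ 2 * V0 ^ ((χ - 1) / χ) * Q_S ^ (1 / χ)
        * χ ^ (2 * χ / (χ - 1)) * (χ - 1) ^ (-2 : ℝ))) :=
  mlmc_asymptotic_work_chi_gt_one_general χ eta Q_W Q_S V0 C_alpha hχ1 heta hQW hQS hV0 W hW c1 c2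
    hc2 Lf hLf
end

section
/- Let C > 0 and Delta > 0, and define f(theta) = theta^{-2} * (1 + C*(1-theta)^{-Delta})^2 for theta in (0,1). Then f attains its minimum over (0,1), and every minimizer theta* satisfies 1/(1+Delta) <= theta* <= (1+C)/(1 + C + C*Delta). -/
/-!
Writing `w = (1-θ)^(-Δ-1)`, the derivative of `f` is
`2 θ⁻³ (1 + C (1-θ)^(-Δ)) (C w ((1+Δ)θ - 1) - 1)`. The last factor is `≤ -1` for
`θ ≤ 1/(1+Δ)`, and for `θ ≥ (1+C)/(1+C+CΔ)`, i.e. `C((1+Δ)θ - 1) ≥ 1-θ`, it is at least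
`(1-θ)^(-Δ) - 1 > 0`. So `f` decreases up to the lower bound and increases from the upper one,
and a minimum over the compact interval between them is a global minimum on `(0,1)`.
-/

open Set

section MinOnInterval

variable {F : ℝ → ℝ} {p a b q : ℝ}

theorem exists_isMinOn_Ioo_of_strictAntiOn_of_strictMonoOn (hpa : p < a) (hab : a ≤ b)
    (hbq : b < q) (hF : ContinuousOn F (Icc a b)) (hanti : StrictAntiOn F (Ioc p a))
    (hmono : StrictMonoOn F (Ico b q)) : ∃ x ∈ Ioo p q, IsMinOn F (Ioo p q) x := by
  obtain ⟨x, hx, hxmin⟩ := isCompact_Icc.exists_isMinOn (nonempty_Icc.mpr hab) hF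
  refine ⟨x, ⟨hpa.trans_le hx.1, hx.2.trans_lt hbq⟩, fun y hy => ?_⟩
  rcases lt_or_ge y a with hya | hay
  · exact (hxmin ⟨le_rfl, hab⟩).trans (hanti ⟨hy.1, hya.le⟩ ⟨hpa, le_rfl⟩ hya).le
  rcases le_or_gt y b with hyb | hby
  · exact hxmin ⟨hay, hyb⟩
  · exact (hxmin ⟨hab, le_rfl⟩).trans (hmono ⟨le_rfl, hbq⟩ ⟨hby.le, hy.2⟩ hby).le

theorem IsMinOn.mem_Icc_of_strictAntiOn_of_strictMonoOn {x : ℝ} (hpa : p < a) (hab : a ≤ b)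
    (hbq : b < q) (hanti : StrictAntiOn F (Ioc p a)) (hmono : StrictMonoOn F (Ico b q))
    (hx : x ∈ Ioo p q) (hmin : IsMinOn F (Ioo p q) x) : x ∈ Icc a b :=
  ⟨not_lt.1 fun hxa =>
      (hanti ⟨hx.1, hxa.le⟩ ⟨hpa, le_rfl⟩ hxa).not_ge (hmin ⟨hpa, hab.trans_lt hbq⟩),
    not_lt.1 fun hbx =>
      (hmono ⟨le_rfl, hbq⟩ ⟨hbx.le, hx.2⟩ hbx).not_ge (hmin ⟨hpa.trans_le hab, hbq⟩)⟩

end MinOnInterval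

noncomputable def splittingCost (C Δ θ : ℝ) : ℝ :=
  θ ^ (-2 : ℝ) * (1 + C * (1 - θ) ^ (-Δ)) ^ 2

section SplittingCost

variable {C Δ θ : ℝ}

theorem hasDerivAt_splittingCost (hθ₀ : 0 < θ) (hθ₁ : θ < 1) :
    HasDerivAt (splittingCost C Δ)
      (2 * θ ^ (-3 : ℝ) * (1 + C * (1 - θ) ^ (-Δ)) *
        (C * (1 - θ) ^ (-Δ - 1) * ((1 + Δ) * θ - 1) - 1)) θ := by
  have hsub : 0 < 1 - θ := sub_pos.2 hθ₁
  have hpow : HasDerivAt (fun x : ℝ => x ^ (-2 : ℝ)) (1 * (-2) * θ ^ ((-2 : ℝ) - 1)) θ :=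
    (hasDerivAt_id θ).rpow_const (Or.inl hθ₀.ne')
  have hinner : HasDerivAt (fun x : ℝ => 1 + C * (1 - x) ^ (-Δ))
      (C * (-1 * (-Δ) * (1 - θ) ^ (-Δ - 1))) θ :=
    ((((hasDerivAt_id θ).const_sub 1).rpow_const (Or.inl hsub.ne')).const_mul C).const_add 1
  refine (hpow.mul (hinner.fun_pow 2)).congr_deriv ?_
  have hθ : θ ^ (-2 : ℝ) = θ ^ (-3 : ℝ) * θ := by
    rw [← Real.rpow_add_one hθ₀.ne']; norm_num
  have hw : (1 - θ) ^ (-Δ) = (1 - θ) ^ (-Δ - 1) * (1 - θ) := by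
    rw [← Real.rpow_add_one hsub.ne']; ring_nf
  rw [hθ, show (-2 : ℝ) - 1 = -3 by norm_num, hw]
  ring

theorem continuousOn_splittingCost : ContinuousOn (splittingCost C Δ) (Ioo 0 1) :=
  fun _ hθ => (hasDerivAt_splittingCost hθ.1 hθ.2).continuousAt.continuousWithinAt

theorem strictAntiOn_splittingCost (hC : 0 ≤ C) (hΔ : 0 < Δ) :
    StrictAntiOn (splittingCost C Δ) (Ioc 0 (1 / (1 + Δ))) := by
  have hlt : 1 / (1 + Δ) < 1 := by rw [div_lt_one (by linarith)]; linarith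
  refine strictAntiOn_of_deriv_neg (convex_Ioc _ _)
    (continuousOn_splittingCost.mono fun θ hθ => ⟨hθ.1, hθ.2.trans_lt hlt⟩) fun θ hθ => ?_
  rw [interior_Ioc] at hθ
  obtain ⟨hθ₀, hθa⟩ := hθ
  have hθ₁ : θ < 1 := hθa.trans hlt
  have hsub : 0 < 1 - θ := sub_pos.2 hθ₁
  have hfactor : (1 + Δ) * θ - 1 < 0 := by
    rw [lt_div_iff₀ (by linarith)] at hθa; linarith
  rw [(hasDerivAt_splittingCost hθ₀ hθ₁).deriv]
  refine mul_neg_of_pos_of_neg (by positivity) ?_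
  have : C * (1 - θ) ^ (-Δ - 1) * ((1 + Δ) * θ - 1) ≤ 0 :=
    mul_nonpos_of_nonneg_of_nonpos (by positivity) hfactor.le
  linarith

theorem strictMonoOn_splittingCost (hC : 0 < C) (hΔ : 0 < Δ) :
    StrictMonoOn (splittingCost C Δ) (Ico ((1 + C) / (1 + C + C * Δ)) 1) := by
  have hb : 0 < (1 + C) / (1 + C + C * Δ) := by positivity
  refine strictMonoOn_of_deriv_pos (convex_Ico _ _)
    (continuousOn_splittingCost.mono fun θ hθ => ⟨hb.trans_le hθ.1, hθ.2⟩) fun θ hθ => ?_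
  rw [interior_Ico] at hθ
  obtain ⟨hbθ, hθ₁⟩ := hθ
  have hθ₀ : 0 < θ := hb.trans hbθ
  have hsub : 0 < 1 - θ := sub_pos.2 hθ₁
  have hfactor : 1 - θ < C * ((1 + Δ) * θ - 1) := by
    rw [div_lt_iff₀ (by positivity)] at hbθ; linarith
  have hw : 1 < (1 - θ) ^ (-Δ - 1) * (1 - θ) := by
    rw [← Real.rpow_add_one hsub.ne', sub_add_cancel]
    exact Real.one_lt_rpow_of_pos_of_lt_one_of_neg hsub (by linarith) (by linarith)
  rw [(hasDerivAt_splittingCost hθ₀ hθ₁).deriv]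
  refine mul_pos (by positivity) ?_
  calc 0 < (1 - θ) ^ (-Δ - 1) * (1 - θ) - 1 := by linarith
    _ ≤ C * (1 - θ) ^ (-Δ - 1) * ((1 + Δ) * θ - 1) - 1 := by
      have := mul_lt_mul_of_pos_left hfactor (Real.rpow_pos_of_pos hsub (-Δ - 1))
      linarith

end SplittingCost

/-- Constrained-`h₀` splitting: `f(θ) = θ⁻² (1 + C (1-θ)^{-Δ})²` attains its
minimum on `(0,1)`, and every minimizer `θ*` satisfies
`1/(1+Δ) ≤ θ* ≤ (1+C)/(1+C+CΔ)`. -/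
theorem mlmc_constrained_splitting_bounds (C Δ : ℝ) (hC : 0 < C) (hΔ : 0 < Δ)
    (f : ℝ → ℝ)
    (hf : ∀ θ : ℝ, f θ = θ ^ (-2 : ℝ) * (1 + C * (1 - θ) ^ (-Δ)) ^ 2) :
    (∃ θ ∈ Set.Ioo (0 : ℝ) 1, ∀ θ' ∈ Set.Ioo (0 : ℝ) 1, f θ ≤ f θ') ∧
    (∀ θ ∈ Set.Ioo (0 : ℝ) 1, (∀ θ' ∈ Set.Ioo (0 : ℝ) 1, f θ ≤ f θ') →
      1 / (1 + Δ) ≤ θ ∧ θ ≤ (1 + C) / (1 + C + C * Δ)) := by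
  obtain rfl : f = splittingCost C Δ := funext hf
  have hlower : 0 < 1 / (1 + Δ) := by positivity
  have hbounds : 1 / (1 + Δ) ≤ (1 + C) / (1 + C + C * Δ) := by
    rw [div_le_div_iff₀ (by positivity) (by positivity)]; nlinarith
  have hupper : (1 + C) / (1 + C + C * Δ) < 1 := by
    rw [div_lt_one (by positivity)]; nlinarith
  have hanti := strictAntiOn_splittingCost hC.le hΔ
  have hmono := strictMonoOn_splittingCost hC hΔ
  refine ⟨?_, fun θ hθ hmin => ?_⟩
  · simpa only [isMinOn_iff] using exists_isMinOn_Ioo_of_strictAntiOn_of_strictMonoOn hlower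
      hbounds hupper (continuousOn_splittingCost.mono (Icc_subset_Ioo hlower hupper)) hanti hmono
  · exact IsMinOn.mem_Icc_of_strictAntiOn_of_strictMonoOn hlower hbounds hupper hanti hmono hθ
      (isMinOn_iff.2 hmin)
end

section
/- Assume chi = q2/(d*gamma) with chi > 0 and chi different from 1. Let h_0 > 0, beta > 1, L >= 1 an integer, theta in (0,1) and tol > 0. Define the geometric hierarchy h_l = h_0 * beta^{-l}, the level variances V_l by V_0 given and V_l = Q_S * h_0^{q2} * beta^{q2} * beta^{-q2*l} for 1 <= l <= L, the level costs W_l = h_0^{-d*gamma} * beta^{d*gamma*l} for 0 <= l <= L, and the sample numbers M_l = (C_alpha/(theta*tol))^2 * sqrt(V_l/W_l) * sum_{k=0}^{L} sqrt(W_k*V_k). Then the total work satisfies sum_{l=0}^{L} M_l*W_l = (C_alpha/(theta*tol))^2 * h_0^{d*gamma*(chi-1)} * ( sqrt(V_0)*h_0^{-q2/2} + sqrt(Q_S)*(1 - beta^{L*(d*gamma - q2)/2})/(beta^{-d*gamma/2} - beta^{-q2/2}) )^2. -/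
/-- Total work (A.16) of a geometric MLMC hierarchy with the
variance-constraint-optimal number of samples, for `χ ≠ 1`. -/
theorem mlmc_geometric_work_chi_ne_one
    (d γ q2 χ Q_S V0 C_alpha tol θ h0 β : ℝ) (L : ℕ)
    (hd : 0 < d) (hγ : 0 < γ) (hq2 : 0 < q2)
    (hχ : χ = q2 / (d * γ)) (hχpos : 0 < χ) (hχ1 : χ ≠ 1)
    (hQS : 0 < Q_S) (hV0 : 0 < V0) (hCα : 0 < C_alpha)
    (htol : 0 < tol) (hθ0 : 0 < θ) (hθ1 : θ < 1)
    (hh0 : 0 < h0) (hβ : 1 < β) (hL : 1 ≤ L)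
    (h V W M : ℕ → ℝ)
    (hh : ∀ l, h l = h0 * β ^ (-(l : ℝ)))
    (hV0' : V 0 = V0)
    (hVl : ∀ l : ℕ, 1 ≤ l → l ≤ L →
      V l = Q_S * h0 ^ q2 * β ^ q2 * β ^ (-(q2 * (l : ℝ))))
    (hWl : ∀ l ≤ L, W l = h0 ^ (-(d * γ)) * β ^ (d * γ * (l : ℝ)))
    (hM : ∀ l ≤ L, M l = (C_alpha / (θ * tol)) ^ 2 * Real.sqrt (V l / W l)
        * ∑ k ∈ Finset.range (L + 1), Real.sqrt (W k * V k)) :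
    ∑ l ∈ Finset.range (L + 1), M l * W l
      = (C_alpha / (θ * tol)) ^ 2 * h0 ^ (d * γ * (χ - 1))
        * (Real.sqrt V0 * h0 ^ (-q2 / 2)
            + Real.sqrt Q_S * (1 - β ^ ((L : ℝ) * (d * γ - q2) / 2))
                / (β ^ (-(d * γ) / 2) - β ^ (-q2 / 2))) ^ 2 := by
  have hβ0 : (0:ℝ) < β := lt_trans one_pos hβ
  set a : ℝ := d * γ with ha_def
  have ha : 0 < a := mul_pos hd hγ
  have hane : q2 ≠ a := by
    intro hqa
    exact hχ1 (by rw [hχ, hqa, div_self ha.ne'])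
  -- squaring an rpow
  have sqr : ∀ (x : ℝ), 0 < x → ∀ e : ℝ, (x ^ e)^2 = x ^ (2*e) := by
    intro x hx e
    rw [sq, ← Real.rpow_add hx]
    ring_nf
  set r : ℝ := β ^ ((a - q2)/2) with hr_def
  have hr0 : 0 < r := Real.rpow_pos_of_pos hβ0 _
  have hr1 : r ≠ 1 := by
    rcases lt_or_gt_of_ne hane with hlt | hgt
    · have h1 : β ^ (0:ℝ) < r := by
        rw [hr_def]
        exact (Real.rpow_lt_rpow_left_iff hβ).mpr (by linarith)
      rw [Real.rpow_zero] at h1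
      exact ne_of_gt h1
    · have h1 : r < β ^ (0:ℝ) := by
        rw [hr_def]
        exact (Real.rpow_lt_rpow_left_iff hβ).mpr (by linarith)
      rw [Real.rpow_zero] at h1
      exact ne_of_lt h1
  have hrn : ∀ n : ℕ, r ^ n = β ^ ((a - q2)/2 * n) := by
    intro n
    rw [hr_def, Real.rpow_mul hβ0.le, Real.rpow_natCast]
  set c2 : ℝ := (C_alpha / (θ * tol)) ^ 2 with hc2
  set S : ℝ := ∑ k ∈ Finset.range (L + 1), Real.sqrt (W k * V k) with hS_def
  set B : ℝ := Real.sqrt Q_S * h0 ^ ((q2 - a)/2) * β ^ (q2/2) with hB_def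
  set X : ℝ := Real.sqrt V0 * h0 ^ (-a/2) with hX_def
  have hWpos : ∀ l ≤ L, 0 < W l := by
    intro l hl
    rw [hWl l hl]
    positivity
  have hVnn : ∀ l ≤ L, 0 ≤ V l := by
    intro l hl
    cases l with
    | zero => rw [hV0']; exact hV0.le
    | succ k =>
        rw [hVl (k+1) (Nat.succ_le_succ (Nat.zero_le k)) hl]
        positivity
  -- step 1: the total work is c2 * S * S
  have sum1 : ∑ l ∈ Finset.range (L + 1), M l * W l = c2 * S * S := by
    have hterm : ∀ l ∈ Finset.range (L + 1), M l * W l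
        = (c2 * S) * Real.sqrt (W l * V l) := by
      intro l hl
      have hlL : l ≤ L := Nat.lt_succ_iff.mp (Finset.mem_range.mp hl)
      have hWp := hWpos l hlL
      have hVn := hVnn l hlL
      have hsW : Real.sqrt (W l) ≠ 0 := (Real.sqrt_pos.mpr hWp).ne'
      rw [hM l hlL, Real.sqrt_div hVn, Real.sqrt_mul hWp.le]
      calc c2 * (Real.sqrt (V l) / Real.sqrt (W l)) * S * W l
          = c2 * S * (Real.sqrt (V l) * (W l / Real.sqrt (W l))) := by ring
        _ = c2 * S * (Real.sqrt (W l) * Real.sqrt (V l)) := by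
            rw [Real.div_sqrt]; ring
    rw [Finset.sum_congr rfl hterm, ← Finset.mul_sum, ← hS_def]
  -- sqrt at level 0
  have hf0 : Real.sqrt (W 0 * V 0) = X := by
    have hW0 : W 0 = h0 ^ (-a) := by
      rw [hWl 0 (Nat.zero_le L)]
      norm_num
    have hsq : W 0 * V 0 = X ^ 2 := by
      rw [hW0, hV0', hX_def, mul_pow, Real.sq_sqrt hV0.le, sqr h0 hh0,
        show 2 * (-a/2) = -a by ring]
      ring
    rw [hsq, Real.sqrt_sq (by rw [hX_def]; positivity)]
  -- sqrt at positive levels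
  have hfk : ∀ k : ℕ, k < L → Real.sqrt (W (k+1) * V (k+1)) = B * r ^ (k+1) := by
    intro k hk
    have hsq : W (k+1) * V (k+1) = (B * r ^ (k+1)) ^ 2 := by
      have hrhs : (B * r ^ (k+1)) ^ 2
          = Q_S * h0 ^ (q2 - a) * β ^ q2 * β ^ ((a - q2) * ((k+1 : ℕ) : ℝ)) := by
        have e1 : (B * r ^ (k+1)) ^ 2
            = (Real.sqrt Q_S)^2 * (h0 ^ ((q2 - a)/2))^2 * (β ^ (q2/2))^2
              * (r ^ (k+1))^2 := by rw [hB_def]; ring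
        rw [e1, Real.sq_sqrt hQS.le, sqr h0 hh0, sqr β hβ0, ← pow_mul,
          hrn ((k+1)*2),
          show 2 * ((q2 - a)/2) = q2 - a by ring,
          show 2 * (q2/2) = q2 by ring,
          show (a - q2)/2 * (((k+1)*2 : ℕ) : ℝ) = (a - q2) * ((k+1 : ℕ) : ℝ) by
            push_cast; ring]
      rw [hWl (k+1) (by omega), hVl (k+1) (by omega) (by omega), hrhs]
      have e2 : h0 ^ (-a) * β ^ (a * ((k+1 : ℕ) : ℝ))
            * (Q_S * h0 ^ q2 * β ^ q2 * β ^ (-(q2 * ((k+1 : ℕ) : ℝ))))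
          = Q_S * (h0 ^ (-a) * h0 ^ q2) * β ^ q2
            * (β ^ (a * ((k+1 : ℕ) : ℝ)) * β ^ (-(q2 * ((k+1 : ℕ) : ℝ)))) := by
        ring
      rw [e2, ← Real.rpow_add hh0, ← Real.rpow_add hβ0,
        show -a + q2 = q2 - a by ring,
        show a * ((k+1 : ℕ) : ℝ) + -(q2 * ((k+1 : ℕ) : ℝ))
          = (a - q2) * ((k+1 : ℕ) : ℝ) by ring]
    rw [hsq, Real.sqrt_sq (by positivity)]
  -- summing the sqrt's
  have hS : S = X + B * (r * ((r ^ L - 1)/(r - 1))) := by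
    rw [hS_def, Finset.sum_range_succ']
    have hcong : ∀ i ∈ Finset.range L,
        Real.sqrt (W (i+1) * V (i+1)) = (B * r) * r ^ i := by
      intro i hi
      rw [hfk i (Finset.mem_range.mp hi), pow_succ]
      ring
    rw [Finset.sum_congr rfl hcong, ← Finset.mul_sum, hf0, geom_sum_eq hr1 L]
    ring
  -- abbreviations appearing in the target
  set x : ℝ := β ^ (-a / 2) with hx_def
  set y : ℝ := β ^ (-q2 / 2) with hy_def
  have hx0 : 0 < x := Real.rpow_pos_of_pos hβ0 _
  have hxr : x * r = y := by
    rw [hx_def, hr_def, ← Real.rpow_add hβ0,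
      show -a/2 + (a - q2)/2 = -q2/2 by ring, ← hy_def]
  have hxy : x - y = x * (1 - r) := by rw [← hxr]; ring
  have hr1' : r - 1 ≠ 0 := sub_ne_zero.mpr hr1
  have h1r : (1 : ℝ) - r ≠ 0 := sub_ne_zero.mpr (Ne.symm hr1)
  have hxyne : x - y ≠ 0 := by
    rw [hxy]
    exact mul_ne_zero hx0.ne' h1r
  have hrL : β ^ ((L : ℝ) * (a - q2) / 2) = r ^ L := by
    rw [hrn L]
    congr 1
    ring
  have key : β ^ (q2/2) * x * r = 1 := by
    rw [hx_def, hr_def, ← Real.rpow_add hβ0, ← Real.rpow_add hβ0,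
      show q2/2 + -a/2 + (a - q2)/2 = 0 by ring, Real.rpow_zero]
  -- geometric-sum identity
  have hgeo : β ^ (q2/2) * (r * ((r ^ L - 1)/(r - 1))) = (1 - r ^ L)/(x - y) := by
    rw [hxy]
    field_simp
    linear_combination (r ^ L - 1) * (1 - r) * key
  -- S in factored form
  have hSI : S = h0 ^ ((q2 - a)/2)
      * (Real.sqrt V0 * h0 ^ (-q2 / 2)
          + Real.sqrt Q_S * (1 - β ^ ((L : ℝ) * (a - q2) / 2)) / (x - y)) := by
    rw [hS, hrL, hB_def]
    have hXeq : X = h0 ^ ((q2 - a)/2) * (Real.sqrt V0 * h0 ^ (-q2/2)) := by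
      rw [hX_def]
      rw [show h0 ^ ((q2 - a)/2) * (Real.sqrt V0 * h0 ^ (-q2/2))
          = Real.sqrt V0 * (h0 ^ ((q2 - a)/2) * h0 ^ (-q2/2)) by ring,
        ← Real.rpow_add hh0, show (q2 - a)/2 + -q2/2 = -a/2 by ring]
    rw [hXeq]
    rw [show Real.sqrt Q_S * h0 ^ ((q2 - a)/2) * β ^ (q2/2)
          * (r * ((r ^ L - 1)/(r - 1)))
        = Real.sqrt Q_S * h0 ^ ((q2 - a)/2)
          * (β ^ (q2/2) * (r * ((r ^ L - 1)/(r - 1)))) by ring, hgeo]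
    ring
  -- final exponent identity
  have hexp : a * (χ - 1) = q2 - a := by
    rw [hχ]
    field_simp
  have hh2 : h0 ^ ((q2 - a)/2) * h0 ^ ((q2 - a)/2) = h0 ^ (q2 - a) := by
    rw [← Real.rpow_add hh0]
    ring_nf
  rw [sum1, hSI, hexp]
  calc c2 * (h0 ^ ((q2 - a)/2)
        * (Real.sqrt V0 * h0 ^ (-q2 / 2)
          + Real.sqrt Q_S * (1 - β ^ ((L : ℝ) * (a - q2) / 2)) / (x - y)))
      * (h0 ^ ((q2 - a)/2)
        * (Real.sqrt V0 * h0 ^ (-q2 / 2)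
          + Real.sqrt Q_S * (1 - β ^ ((L : ℝ) * (a - q2) / 2)) / (x - y)))
      = c2 * (h0 ^ ((q2 - a)/2) * h0 ^ ((q2 - a)/2))
        * (Real.sqrt V0 * h0 ^ (-q2 / 2)
          + Real.sqrt Q_S * (1 - β ^ ((L : ℝ) * (a - q2) / 2)) / (x - y)) ^ 2 := by
        ring
    _ = c2 * h0 ^ (q2 - a)
        * (Real.sqrt V0 * h0 ^ (-q2 / 2)
          + Real.sqrt Q_S * (1 - β ^ ((L : ℝ) * (a - q2) / 2)) / (x - y)) ^ 2 := by
        rw [hh2]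
end

section
/- Assume q2 = d*gamma (i.e. chi = 1). Let h_0 > 0, beta > 1, L >= 1 an integer, theta in (0,1) and tol > 0. Define the geometric hierarchy h_l = h_0 * beta^{-l}, the level variances V_l by V_0 given and V_l = Q_S * h_0^{q2} * beta^{q2} * beta^{-q2*l} for 1 <= l <= L, the level costs W_l = h_0^{-q2} * beta^{q2*l} for 0 <= l <= L, and the sample numbers M_l = (C_alpha/(theta*tol))^2 * sqrt(V_l/W_l) * sum_{k=0}^{L} sqrt(W_k*V_k). Then the total work satisfies sum_{l=0}^{L} M_l*W_l = (C_alpha/(theta*tol))^2 * ( sqrt(V_0)*h_0^{-q2/2} + L*sqrt(Q_S)*beta^{q2/2} )^2. -/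
/-- Total work (A.15) of a geometric MLMC hierarchy with the
variance-constraint-optimal number of samples, for `χ = 1` (`q₂ = dγ`). -/
theorem mlmc_geometric_work_chi_eq_one
    (d γ q2 Q_S V0 C_alpha tol θ h0 β : ℝ) (L : ℕ)
    (hd : 0 < d) (hγ : 0 < γ) (hq2 : 0 < q2) (hchi : q2 = d * γ)
    (hQS : 0 < Q_S) (hV0 : 0 < V0) (hCα : 0 < C_alpha)
    (htol : 0 < tol) (hθ0 : 0 < θ) (hθ1 : θ < 1)
    (hh0 : 0 < h0) (hβ : 1 < β) (hL : 1 ≤ L)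
    (h V W M : ℕ → ℝ)
    (hh : ∀ l, h l = h0 * β ^ (-(l : ℝ)))
    (hV0' : V 0 = V0)
    (hVl : ∀ l : ℕ, 1 ≤ l → l ≤ L →
      V l = Q_S * h0 ^ q2 * β ^ q2 * β ^ (-(q2 * (l : ℝ))))
    (hWl : ∀ l ≤ L, W l = h0 ^ (-q2) * β ^ (q2 * (l : ℝ)))
    (hM : ∀ l ≤ L, M l = (C_alpha / (θ * tol)) ^ 2 * Real.sqrt (V l / W l)
        * ∑ k ∈ Finset.range (L + 1), Real.sqrt (W k * V k)) :
    ∑ l ∈ Finset.range (L + 1), M l * W l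
      = (C_alpha / (θ * tol)) ^ 2
        * (Real.sqrt V0 * h0 ^ (-q2 / 2)
            + (L : ℝ) * Real.sqrt Q_S * β ^ (q2 / 2)) ^ 2 := by
  have hβ0 : (0:ℝ) < β := lt_trans one_pos hβ
  set K := (C_alpha / (θ * tol)) ^ 2 with hK
  set S := ∑ k ∈ Finset.range (L + 1), Real.sqrt (W k * V k) with hS
  -- positivity of V and W on levels ≤ L
  have hVpos : ∀ l ≤ L, 0 < V l := by
    intro l hl
    rcases Nat.eq_zero_or_pos l with rfl | hl1
    · rw [hV0']; exact hV0
    · rw [hVl l hl1 hl]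
      positivity
  have hWpos : ∀ l ≤ L, 0 < W l := by
    intro l hl
    rw [hWl l hl]
    positivity
  -- product W l * V l
  have hWV0 : W 0 * V 0 = V0 * h0 ^ (-q2) := by
    rw [hWl 0 (Nat.zero_le _), hV0']
    simp [mul_comm]
  have hWVl : ∀ l : ℕ, 1 ≤ l → l ≤ L → W l * V l = Q_S * β ^ q2 := by
    intro l hl1 hl
    rw [hWl l hl, hVl l hl1 hl]
    have h1 : h0 ^ (-q2) * h0 ^ q2 = 1 := by
      rw [← Real.rpow_add hh0]; simp
    have h2 : β ^ (q2 * (l:ℝ)) * β ^ (-(q2 * (l:ℝ))) = 1 := by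
      rw [← Real.rpow_add hβ0]; simp
    calc h0 ^ (-q2) * β ^ (q2 * (l:ℝ)) *
          (Q_S * h0 ^ q2 * β ^ q2 * β ^ (-(q2 * (l:ℝ))))
        = Q_S * β ^ q2 * (h0 ^ (-q2) * h0 ^ q2) *
            (β ^ (q2 * (l:ℝ)) * β ^ (-(q2 * (l:ℝ)))) := by ring
      _ = Q_S * β ^ q2 := by rw [h1, h2]; ring
  -- sqrt of rpow
  have hsrpow : ∀ x : ℝ, 0 < x → ∀ r : ℝ, Real.sqrt (x ^ r) = x ^ (r / 2) := by
    intro x hx r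
    rw [Real.sqrt_eq_rpow, ← Real.rpow_mul hx.le, mul_one_div]
  -- value of S
  have hSval : S = Real.sqrt V0 * h0 ^ (-q2 / 2)
      + (L : ℝ) * Real.sqrt Q_S * β ^ (q2 / 2) := by
    rw [hS, Finset.sum_range_succ']
    have hterm : ∀ k ∈ Finset.range L,
        Real.sqrt (W (k+1) * V (k+1)) = Real.sqrt Q_S * β ^ (q2 / 2) := by
      intro k hk
      rw [Finset.mem_range] at hk
      rw [hWVl (k+1) (Nat.le_add_left 1 k) (Nat.succ_le_of_lt hk),
        Real.sqrt_mul hQS.le, hsrpow β hβ0]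
    rw [Finset.sum_congr rfl hterm, Finset.sum_const, Finset.card_range,
      nsmul_eq_mul, hWV0, Real.sqrt_mul hV0.le, hsrpow h0 hh0]
    ring
  -- each term of the total work
  have hterm : ∀ l ∈ Finset.range (L + 1),
      M l * W l = K * S * Real.sqrt (W l * V l) := by
    intro l hl
    rw [Finset.mem_range, Nat.lt_succ_iff] at hl
    rw [hM l hl, Real.sqrt_div (hVpos l hl).le]
    have hWs : Real.sqrt (W l) ≠ 0 := by
      exact (Real.sqrt_pos.mpr (hWpos l hl)).ne'
    rw [mul_comm (W l) (V l), Real.sqrt_mul (hVpos l hl).le]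
    field_simp
    linear_combination (-1) * C_alpha ^ 2 * θ⁻¹ ^ 2 * tol⁻¹ ^ 2 * Real.sqrt (V l)
      * S * Real.mul_self_sqrt (hWpos l hl).le
  rw [Finset.sum_congr rfl hterm, ← Finset.mul_sum, ← hS, hSval]
  ring
end

section
/- Assume chi = q2/(d*gamma) > 1 and set beta = chi^{2/(d*gamma*(chi-1))}. For h_0 > 0 and an integer L >= 1 define G(L, h_0) = h_0^{d*gamma*(chi-1)} * ( sqrt(V_0)*h_0^{-q2/2} + sqrt(Q_S)*(1 - beta^{L*(d*gamma - q2)/2})/(beta^{-d*gamma/2} - beta^{-q2/2}) )^2. Then, as L tends to infinity, G(L, h_0) tends to h_0^{d*gamma*(chi-1)} * ( sqrt(V_0)*h_0^{-q2/2} + sqrt(Q_S) * chi^{chi/(chi-1)}/(chi-1) )^2; moreover, if h_0 = (V_0/Q_S)^{1/q2} * chi^{2/(d*gamma*(1-chi))}, then this limit equals V_0^{(chi-1)/chi} * Q_S^{1/chi} * chi^{2*chi/(chi-1)} * (chi-1)^{-2}. -/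
/-!
Write `q2 = dγχ`. Then every power of `β` is a power of `χ`, namely
`β ^ (dγ x / 2) = χ ^ (x / (χ - 1))`. Hence the geometric ratio of the level terms is
`β ^ ((dγ - q2) / 2) = χ⁻¹ < 1`, so the factor `1 - β ^ (L (dγ - q2) / 2)` tends to `1`, and the
denominator is `χ ^ (-1 / (χ - 1)) - χ ^ (-χ / (χ - 1)) = (χ - 1) χ ^ (-χ / (χ - 1))`.
At the prescribed `h₀` each power of `h₀` is a power of `V₀ / Q_S` times a power of `χ`; the
first summand of the bracket becomes `√Q_S χ ^ (χ / (χ - 1))`, the bracket collapses to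
`√Q_S χ ^ (χ / (χ - 1)) χ / (χ - 1)`, and the powers of `χ` and of `Q_S` combine into `C₂`.
-/

open Filter

namespace Real

variable {χ : ℝ}

lemma rpow_two_div_mul_sub_one_rpow_mul_div_two (hχ : 0 < χ) (hχ1 : χ ≠ 1) {a : ℝ}
    (ha : a ≠ 0) (x : ℝ) :
    (χ ^ (2 / (a * (χ - 1)))) ^ (a * x / 2) = χ ^ (x / (χ - 1)) := by
  have hsub : χ - 1 ≠ 0 := sub_ne_zero.2 hχ1
  rw [← rpow_mul hχ.le]
  congr 1
  field_simp

lemma rpow_neg_one_div_sub_rpow_neg_div (hχ : 0 < χ) (hχ1 : χ ≠ 1) :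
    χ ^ (-1 / (χ - 1)) - χ ^ (-χ / (χ - 1)) = (χ - 1) / χ ^ (χ / (χ - 1)) := by
  have hsub : χ - 1 ≠ 0 := sub_ne_zero.2 hχ1
  have hsplit : -1 / (χ - 1) = 1 + -χ / (χ - 1) := by field_simp; ring
  rw [hsplit, rpow_add hχ, rpow_one, neg_div, rpow_neg hχ.le]
  ring

lemma mul_rpow_rpow_div_mul_rpow_two_div (hχ : 0 < χ) (hχ1 : χ ≠ 1) {P a : ℝ} (hP : 0 ≤ P)
    (ha : a ≠ 0) (y : ℝ) :
    (P ^ (1 / (a * χ)) * χ ^ (2 / (a * (1 - χ)))) ^ (a * y)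
      = P ^ (y / χ) * χ ^ (2 * y / (1 - χ)) := by
  rw [mul_rpow (rpow_nonneg hP _) (rpow_nonneg hχ.le _), ← rpow_mul hP, ← rpow_mul hχ.le]
  have hsub : 1 - χ ≠ 0 := sub_ne_zero.2 hχ1.symm
  congr 2 <;> field_simp

lemma sqrt_mul_div_rpow_neg_half {V Q : ℝ} (hV : 0 < V) (hQ : 0 ≤ Q) :
    √V * (V / Q) ^ (-(1 / 2) : ℝ) = √Q := by
  rw [sqrt_eq_rpow, sqrt_eq_rpow, rpow_neg (div_nonneg hV.le hQ), div_rpow hV.le hQ,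
    inv_div, mul_div_cancel₀ _ (rpow_pos_of_pos hV _).ne']

lemma div_rpow_sub_one_div_mul (hχ : χ ≠ 0) {V Q : ℝ} (hV : 0 ≤ V) (hQ : 0 < Q) :
    (V / Q) ^ ((χ - 1) / χ) * Q = V ^ ((χ - 1) / χ) * Q ^ (1 / χ) := by
  have hsplit : (χ - 1) / χ = 1 - 1 / χ := by field_simp
  rw [div_rpow hV hQ.le, hsplit, rpow_sub hQ, rpow_one]
  field_simp

end Real

lemma tendsto_mul_add_mul_one_sub_pow_div_sq {r : ℝ} (hr : |r| < 1) (c A B D : ℝ) :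
    Tendsto (fun n : ℕ => c * (A + B * (1 - r ^ n) / D) ^ 2) atTop
      (nhds (c * (A + B / D) ^ 2)) := by
  have h := tendsto_pow_atTop_nhds_zero_of_abs_lt_one hr
  simpa using (((tendsto_const_nhds (x := (1 : ℝ))).sub h).const_mul B).div_const D
    |>.const_add A |>.pow 2 |>.const_mul c

namespace MLMC

variable {χ a : ℝ}

lemma geometric_level_ratio (hχ : 0 < χ) (hχ1 : χ ≠ 1) (ha : a ≠ 0) (L : ℕ) :
    (χ ^ (2 / (a * (χ - 1)))) ^ ((L : ℝ) * (a - a * χ) / 2) = χ⁻¹ ^ L := by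
  rw [show (L : ℝ) * (a - a * χ) / 2 = a * (-L * (χ - 1)) / 2 by ring,
    Real.rpow_two_div_mul_sub_one_rpow_mul_div_two hχ hχ1 ha,
    mul_div_cancel_right₀ _ (sub_ne_zero.2 hχ1), Real.rpow_neg hχ.le, Real.rpow_natCast, inv_pow]

lemma geometric_level_denominator (hχ : 0 < χ) (hχ1 : χ ≠ 1) (ha : a ≠ 0) :
    (χ ^ (2 / (a * (χ - 1)))) ^ (-a / 2) - (χ ^ (2 / (a * (χ - 1)))) ^ (-(a * χ) / 2)
      = (χ - 1) / χ ^ (χ / (χ - 1)) := by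
  rw [show -a / 2 = a * (-1) / 2 by ring, show -(a * χ) / 2 = a * (-χ) / 2 by ring,
    Real.rpow_two_div_mul_sub_one_rpow_mul_div_two hχ hχ1 ha,
    Real.rpow_two_div_mul_sub_one_rpow_mul_div_two hχ hχ1 ha,
    Real.rpow_neg_one_div_sub_rpow_neg_div hχ hχ1]

lemma work_constant_of_balanced_terms (hχ1 : 1 < χ) {V Q : ℝ} (hV : 0 < V) (hQ : 0 < Q) :
    (V / Q) ^ ((χ - 1) / χ) * χ ^ (-2 : ℝ)
        * (√Q * χ ^ (χ / (χ - 1)) + √Q * χ ^ (χ / (χ - 1)) / (χ - 1)) ^ 2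
      = V ^ ((χ - 1) / χ) * Q ^ (1 / χ) * χ ^ (2 * χ / (χ - 1)) * (χ - 1) ^ (-2 : ℝ) := by
  have hχ : 0 < χ := by linarith
  have hsub : χ - 1 ≠ 0 := by linarith
  have hsum : √Q * χ ^ (χ / (χ - 1)) + √Q * χ ^ (χ / (χ - 1)) / (χ - 1)
      = √Q * χ ^ (χ / (χ - 1)) * χ / (χ - 1) := by
    field_simp
    ring
  have hsq : (χ ^ (χ / (χ - 1))) ^ 2 = χ ^ (2 * χ / (χ - 1)) := by
    rw [← Real.rpow_mul_natCast hχ.le]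
    ring_nf
  have hχ_sq : χ ^ (-2 : ℝ) = (χ ^ 2)⁻¹ := by
    rw [Real.rpow_neg hχ.le, ← Real.rpow_natCast]
    norm_num
  have hsub_sq : (χ - 1) ^ (-2 : ℝ) = ((χ - 1) ^ 2)⁻¹ := by
    rw [Real.rpow_neg (by linarith), ← Real.rpow_natCast]
    norm_num
  rw [hsum, hχ_sq, hsub_sq, ← Real.div_rpow_sub_one_div_mul hχ.ne' hV.le hQ, ← hsq, div_pow,
    mul_pow, mul_pow, Real.sq_sqrt hQ.le]
  field_simp

lemma work_limit_at_optimal_h0 (hχ1 : 1 < χ) (ha : a ≠ 0) {V Q h0 : ℝ} (hV : 0 < V)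
    (hQ : 0 < Q) (hh0 : h0 = (V / Q) ^ (1 / (a * χ)) * χ ^ (2 / (a * (1 - χ)))) :
    h0 ^ (a * (χ - 1)) * (√V * h0 ^ (-(a * χ) / 2) + √Q * χ ^ (χ / (χ - 1)) / (χ - 1)) ^ 2
      = V ^ ((χ - 1) / χ) * Q ^ (1 / χ) * χ ^ (2 * χ / (χ - 1)) * (χ - 1) ^ (-2 : ℝ) := by
  have hχ : 0 < χ := by linarith
  have hsub : χ - 1 ≠ 0 := by linarith
  have hsub' : 1 - χ ≠ 0 := by linarith
  have hVQ : 0 ≤ V / Q := (div_pos hV hQ).le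
  have hpow_work : h0 ^ (a * (χ - 1)) = (V / Q) ^ ((χ - 1) / χ) * χ ^ (-2 : ℝ) := by
    rw [hh0, Real.mul_rpow_rpow_div_mul_rpow_two_div hχ hχ1.ne' hVQ ha]
    congr 2
    field_simp
    ring
  have hpow_variance : h0 ^ (-(a * χ) / 2) = (V / Q) ^ (-(1 / 2) : ℝ) * χ ^ (χ / (χ - 1)) := by
    rw [hh0, show -(a * χ) / 2 = a * (-χ / 2) by ring,
      Real.mul_rpow_rpow_div_mul_rpow_two_div hχ hχ1.ne' hVQ ha]
    congr 2
    · field_simp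
    · field_simp
      ring
  rw [hpow_work, hpow_variance, ← mul_assoc, Real.sqrt_mul_div_rpow_neg_half hV hQ.le]
  exact work_constant_of_balanced_terms hχ1 hV hQ

end MLMC

theorem mlmc_geometric_work_limit_chi_gt_one_general
    (d γ q2 χ Q_S V0 β : ℝ)
    (hχ : χ = q2 / (d * γ)) (hχ1 : 1 < χ)
    (hQS : 0 < Q_S) (hV0 : 0 < V0)
    (hβ : β = χ ^ (2 / (d * γ * (χ - 1))))
    (G : ℕ → ℝ → ℝ)
    (hG : ∀ L : ℕ, 1 ≤ L → ∀ h0 : ℝ, 0 < h0 → G L h0 =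
      h0 ^ (d * γ * (χ - 1))
        * (Real.sqrt V0 * h0 ^ (-q2 / 2)
            + Real.sqrt Q_S * (1 - β ^ ((L : ℝ) * (d * γ - q2) / 2))
                / (β ^ (-(d * γ) / 2) - β ^ (-q2 / 2))) ^ 2) :
    (∀ h0 : ℝ, 0 < h0 →
      Tendsto (fun L : ℕ => G L h0) atTop
        (nhds (h0 ^ (d * γ * (χ - 1))
          * (Real.sqrt V0 * h0 ^ (-q2 / 2)
              + Real.sqrt Q_S * χ ^ (χ / (χ - 1)) / (χ - 1)) ^ 2))) ∧
    (∀ h0 : ℝ, h0 = (V0 / Q_S) ^ (1 / q2) * χ ^ (2 / (d * γ * (1 - χ))) →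
      h0 ^ (d * γ * (χ - 1))
          * (Real.sqrt V0 * h0 ^ (-q2 / 2)
              + Real.sqrt Q_S * χ ^ (χ / (χ - 1)) / (χ - 1)) ^ 2
        = V0 ^ ((χ - 1) / χ) * Q_S ^ (1 / χ) * χ ^ (2 * χ / (χ - 1))
            * (χ - 1) ^ (-2 : ℝ)) := by
  have hχ0 : 0 < χ := by linarith
  have ha : d * γ ≠ 0 := by
    rintro h
    rw [h, div_zero] at hχ
    linarith
  obtain rfl : q2 = d * γ * χ := by rw [hχ, mul_div_cancel₀ _ ha]
  subst hβ
  refine ⟨fun h0 hh0 => ?_, fun h0 hh0 => MLMC.work_limit_at_optimal_h0 hχ1 ha hV0 hQS hh0⟩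
  have hr : |χ⁻¹| < 1 := by
    rw [abs_inv, abs_of_pos hχ0]
    exact inv_lt_one_of_one_lt₀ hχ1
  have hlim := tendsto_mul_add_mul_one_sub_pow_div_sq hr (h0 ^ (d * γ * (χ - 1)))
    (√V0 * h0 ^ (-(d * γ * χ) / 2)) √Q_S ((χ - 1) / χ ^ (χ / (χ - 1)))
  rw [div_div_eq_mul_div] at hlim
  refine hlim.congr' ?_
  filter_upwards [eventually_ge_atTop 1] with L hL
  rw [hG L hL h0 hh0, MLMC.geometric_level_ratio hχ0 hχ1.ne' ha,
    MLMC.geometric_level_denominator hχ0 hχ1.ne' ha]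

/-- Limit as `L → ∞` of the normalized work of geometric MLMC hierarchies for
`χ > 1`, and the choice of `h₀` for which this limit equals the constant `C₂`
of the optimal non-geometric hierarchies. -/
theorem mlmc_geometric_work_limit_chi_gt_one
    (d γ q2 χ Q_S V0 β : ℝ)
    (hd : 0 < d) (hγ : 0 < γ) (hq2 : 0 < q2)
    (hχ : χ = q2 / (d * γ)) (hχ1 : 1 < χ)
    (hQS : 0 < Q_S) (hV0 : 0 < V0)
    (hβ : β = χ ^ (2 / (d * γ * (χ - 1))))
    (G : ℕ → ℝ → ℝ)
    (hG : ∀ L : ℕ, 1 ≤ L → ∀ h0 : ℝ, 0 < h0 → G L h0 =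
      h0 ^ (d * γ * (χ - 1))
        * (Real.sqrt V0 * h0 ^ (-q2 / 2)
            + Real.sqrt Q_S * (1 - β ^ ((L : ℝ) * (d * γ - q2) / 2))
                / (β ^ (-(d * γ) / 2) - β ^ (-q2 / 2))) ^ 2) :
    (∀ h0 : ℝ, 0 < h0 →
      Tendsto (fun L : ℕ => G L h0) atTop
        (nhds (h0 ^ (d * γ * (χ - 1))
          * (Real.sqrt V0 * h0 ^ (-q2 / 2)
              + Real.sqrt Q_S * χ ^ (χ / (χ - 1)) / (χ - 1)) ^ 2))) ∧
    (∀ h0 : ℝ, h0 = (V0 / Q_S) ^ (1 / q2) * χ ^ (2 / (d * γ * (1 - χ))) →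
      h0 ^ (d * γ * (χ - 1))
          * (Real.sqrt V0 * h0 ^ (-q2 / 2)
              + Real.sqrt Q_S * χ ^ (χ / (χ - 1)) / (χ - 1)) ^ 2
        = V0 ^ ((χ - 1) / χ) * Q_S ^ (1 / χ) * χ ^ (2 * χ / (χ - 1))
            * (χ - 1) ^ (-2 : ℝ)) :=
  mlmc_geometric_work_limit_chi_gt_one_general d γ q2 χ Q_S V0 β hχ hχ1 hQS hV0 hβ G hG
end
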